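/- arXiv:2410.21569 — 10 statements merged into one kernel-verified Lean document; each statement's English description precedes it below -/
import Mathlib

section
/- Every finite nonempty connected P5-free simple graph G has a dominating set D such that the subgraph of G induced on D is either an induced path on 3 vertices or a (nonempty) clique. -/
/-- A simple graph is `P5`-free if it contains no induced path on 5 vertices. -/
def IsP5Free {V : Type*} (G : SimpleGraph V) : Prop :=
  ¬ ∃ p : Fin 5 → V, Function.Injective p ∧
    ∀ i j : Fin 5, G.Adj (p i) (p j) ↔ (j.val = i.val + 1 ∨ i.val = j.val + 1)

/-- `D` is a dominating set of `G`: every vertex is in `D` or has a neighbor in `D`. -/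
def IsDomSet {V : Type*} (G : SimpleGraph V) (D : Set V) : Prop :=
  ∀ v : V, v ∈ D ∨ ∃ d ∈ D, G.Adj v d

namespace BTaux
open SimpleGraph

variable {V : Type*} {G : SimpleGraph V}

lemma p5 (hP5 : IsP5Free G) {v1 v2 v3 v4 v5 : V}
    (a12 : G.Adj v1 v2) (a23 : G.Adj v2 v3) (a34 : G.Adj v3 v4) (a45 : G.Adj v4 v5)
    (n13 : ¬ G.Adj v1 v3) (n14 : ¬ G.Adj v1 v4) (n15 : ¬ G.Adj v1 v5)
    (n24 : ¬ G.Adj v2 v4) (n25 : ¬ G.Adj v2 v5) (n35 : ¬ G.Adj v3 v5)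
    (d13 : v1 ≠ v3) (d14 : v1 ≠ v4) (d15 : v1 ≠ v5) (d24 : v2 ≠ v4) (d25 : v2 ≠ v5)
    (d35 : v3 ≠ v5) : False := by
  have d12 := a12.ne; have d23 := a23.ne; have d34 := a34.ne; have d45 := a45.ne
  have a21 := a12.symm; have a32 := a23.symm; have a43 := a34.symm; have a54 := a45.symm
  have n31 : ¬ G.Adj v3 v1 := fun h => n13 h.symm
  have n41 : ¬ G.Adj v4 v1 := fun h => n14 h.symm
  have n51 : ¬ G.Adj v5 v1 := fun h => n15 h.symm
  have n42 : ¬ G.Adj v4 v2 := fun h => n24 h.symm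
  have n52 : ¬ G.Adj v5 v2 := fun h => n25 h.symm
  have n53 : ¬ G.Adj v5 v3 := fun h => n35 h.symm
  apply hP5
  refine ⟨![v1, v2, v3, v4, v5], ?_, ?_⟩
  · intro i j hij
    fin_cases i <;> fin_cases j <;> simp_all
  · intro i j
    fin_cases i <;> fin_cases j <;>
      simp_all [SimpleGraph.irrefl]

/-- Take the first `n` steps of a walk. -/
def wtake : {x y : V} → (w : G.Walk x y) → (n : ℕ) → G.Walk x (w.getVert n)
  | _, _, .nil, _ => .nil
  | _, _, .cons h _, 0 => .nil
  | _, _, .cons h q, n + 1 => .cons h (wtake q n)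

lemma length_wtake {x y : V} (w : G.Walk x y) (n : ℕ) :
    (wtake w n).length = min n w.length := by
  induction w generalizing n with
  | nil => simp [wtake]
  | cons h q ih =>
    cases n with
    | zero => simp [wtake]; rfl
    | succ n => simp [wtake, ih, Nat.succ_min_succ]

lemma support_wtake {x y : V} (w : G.Walk x y) (n : ℕ) :
    ∀ v ∈ (wtake w n).support, v ∈ w.support := by
  induction w generalizing n with
  | nil => simp [wtake]
  | cons h q ih =>
    cases n with
    | zero =>
      intro v hv
      simp [wtake] at hv
      simp [hv]
      exact Or.inl (List.mem_singleton.1 hv)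
    | succ n =>
      intro v hv
      rw [show wtake (Walk.cons h q) (n+1) = Walk.cons h (wtake q n) from rfl] at hv
      change v ∈ List.cons _ (wtake q n).support at hv
      rw [Walk.support_cons]
      rcases List.mem_cons.1 hv with h1 | h1
      · exact List.mem_cons.2 (Or.inl h1)
      · exact List.mem_cons.2 (Or.inr (ih n v h1))

lemma getVert_mem_support {x y : V} (w : G.Walk x y) (n : ℕ) :
    w.getVert n ∈ w.support := by
  induction w generalizing n with
  | nil => simp [Walk.getVert]
  | cons h q ih =>
    cases n with
    | zero => simp [Walk.getVert]
    | succ n =>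
      rw [Walk.support_cons]
      exact List.mem_cons.2 (Or.inr (ih n))

lemma mem_support_concat {x y k v : V} (w : G.Walk x y) (h : G.Adj y k)
    (hv : v ∈ (w.concat h).support) : v ∈ w.support ∨ v = k := by
  rw [SimpleGraph.Walk.support_concat, List.mem_append] at hv
  simpa using hv

/-- walks from x to y staying inside X, by length -/
def wlens (G : SimpleGraph V) (X : Finset V) (x y : V) : Set ℕ :=
  {n | ∃ w : G.Walk x y, w.length = n ∧ ∀ v ∈ w.support, v ∈ X}

noncomputable def dIn (G : SimpleGraph V) (X : Finset V) (x y : V) : ℕ :=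
  sInf (wlens G X x y)

lemma wlens_symm (X : Finset V) (x y : V) : wlens G X x y = wlens G X y x := by
  ext n
  constructor <;> rintro ⟨w, hl, hs⟩ <;>
    exact ⟨w.reverse, by simp [hl], by simpa using hs⟩

lemma dIn_symm (X : Finset V) (x y : V) : dIn G X x y = dIn G X y x := by
  unfold dIn; rw [wlens_symm]

lemma dIn_witness {X : Finset V} {x y : V} (h : (wlens G X x y).Nonempty) :
    ∃ w : G.Walk x y, w.length = dIn G X x y ∧ ∀ v ∈ w.support, v ∈ X :=
  Nat.sInf_mem h

lemma dIn_le {X : Finset V} {x y : V} {w : G.Walk x y} (hs : ∀ v ∈ w.support, v ∈ X) :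
    dIn G X x y ≤ w.length :=
  Nat.sInf_le ⟨w, rfl, hs⟩

/-- A finite "connected-within-X" set with at least 2 elements has a non-cut vertex. -/
lemma exists_noncut [DecidableEq V] {X : Finset V}
    (hc : ∀ x ∈ X, ∀ y ∈ X, ∃ w : G.Walk x y, ∀ v ∈ w.support, v ∈ X)
    (hcard : 2 ≤ X.card) :
    ∃ a ∈ X, ∀ x ∈ X.erase a, ∀ y ∈ X.erase a,
      ∃ w : G.Walk x y, ∀ v ∈ w.support, v ∈ X.erase a := by
  have hne : X.Nonempty := Finset.card_pos.1 (by omega)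
  obtain ⟨r, hr⟩ := hne
  obtain ⟨a, ha, hmax⟩ := X.exists_max_image (fun x => dIn G X r x) ⟨r, hr⟩
  have hnonem : ∀ x ∈ X, ∀ y ∈ X, (wlens G X x y).Nonempty := by
    intro x hx y hy
    obtain ⟨w, hw⟩ := hc x hx y hy
    exact ⟨w.length, w, rfl, hw⟩
  have hdrr : dIn G X r r = 0 := by
    apply Nat.le_zero.1
    calc dIn G X r r ≤ (Walk.nil : G.Walk r r).length :=
          dIn_le (by intro v hv; simp at hv; simpa [hv])
      _ = 0 := rfl
  have har : a ≠ r := by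
    obtain ⟨x, hx, hxr⟩ := Finset.exists_mem_ne (show 1 < X.card by omega) r
    intro h
    have h1 : 1 ≤ dIn G X r x := by
      by_contra h2
      push_neg at h2
      have h0 : dIn G X r x = 0 := by omega
      obtain ⟨w, hwl, -⟩ := dIn_witness (hnonem r hr x hx)
      exact hxr (Walk.eq_of_length_eq_zero (by rw [hwl, h0])).symm
    have := hmax x hx
    rw [h, hdrr] at this
    omega
  refine ⟨a, ha, ?_⟩
  have key : ∀ x ∈ X.erase a, ∃ w : G.Walk x r, ∀ v ∈ w.support, v ∈ X.erase a := by
    intro x hx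
    have hxX := Finset.mem_of_mem_erase hx
    have hxa : x ≠ a := Finset.ne_of_mem_erase hx
    obtain ⟨w, hwl, hws⟩ := dIn_witness (hnonem x hxX r hr)
    by_cases haw : a ∈ w.support
    · exfalso
      set w1 := w.takeUntil a haw with hw1
      set w2 := w.dropUntil a haw with hw2
      have hspec : w1.append w2 = w := w.take_spec haw
      have hlen : w1.length + w2.length = w.length := by
        rw [← hspec]; simp [Walk.length_append]
      have h1 : 1 ≤ w1.length := by
        by_contra h2
        push_neg at h2
        exact hxa (Walk.eq_of_length_eq_zero (p := w1) (by omega))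
      have h2 : dIn G X a r ≤ w2.length := by
        apply dIn_le
        intro v hv
        exact hws v (by rw [← hspec]; simp [Walk.mem_support_append_iff]; exact Or.inr hv)
      have h3 : dIn G X x r ≤ dIn G X r a := by
        rw [dIn_symm X x r]
        exact hmax x hxX
      have h4 : dIn G X r a = dIn G X a r := dIn_symm X r a
      omega
    · refine ⟨w, fun v hv => Finset.mem_erase.2 ⟨?_, hws v hv⟩⟩
      intro h; exact haw (h ▸ hv)
  intro x hx y hy
  obtain ⟨wx, hwx⟩ := key x hx
  obtain ⟨wy, hwy⟩ := key y hy
  refine ⟨wx.append wy.reverse, ?_⟩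
  intro v hv
  rw [Walk.mem_support_append_iff] at hv
  rcases hv with h | h
  · exact hwx v h
  · exact hwy v (by simpa using h)

end BTaux

theorem stmt0 {V : Type*} [Fintype V] (G : SimpleGraph V)
    (hconn : G.Connected) (hP5 : IsP5Free G) :
    ∃ D : Set V, IsDomSet G D ∧
      ((∃ a b c : V, D = {a, b, c} ∧ a ≠ b ∧ a ≠ c ∧ b ≠ c ∧
          G.Adj a b ∧ G.Adj b c ∧ ¬ G.Adj a c) ∨
       (D.Nonempty ∧ G.IsClique D)) := by
  classical
  obtain ⟨v0⟩ := hconn.nonempty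
  set CDS : Finset V → Prop := fun X =>
    IsDomSet G ↑X ∧ ∀ x ∈ X, ∀ y ∈ X, ∃ w : G.Walk x y, ∀ v ∈ w.support, v ∈ X with hCDS
  have hCDSuniv : CDS Finset.univ := by
    constructor
    · intro v; exact Or.inl (by simp)
    · intro x _ y _
      obtain ⟨w⟩ := hconn.preconnected x y
      exact ⟨w, fun v _ => Finset.mem_univ v⟩
  have hTne0 : {n | ∃ X : Finset V, CDS X ∧ X.card = n}.Nonempty :=
    ⟨_, _, hCDSuniv, rfl⟩
  obtain ⟨X, hX, hXcard⟩ := Nat.sInf_mem hTne0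
  have hmin : ∀ Y : Finset V, CDS Y → X.card ≤ Y.card := by
    intro Y hY
    rw [hXcard]
    exact Nat.sInf_le ⟨Y, hY, rfl⟩
  have hXdom := hX.1
  have hXconn := hX.2
  have hXne : X.Nonempty := by
    rcases hXdom v0 with h | ⟨d, hd, _⟩
    · exact ⟨v0, by simpa using h⟩
    · exact ⟨d, by simpa using hd⟩
  by_cases hX1 : X.card = 1
  · obtain ⟨x0, hx0⟩ := Finset.card_eq_one.1 hX1
    refine ⟨↑X, hXdom, Or.inr ⟨by simpa using hXne, ?_⟩⟩
    subst hx0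
    simp
  have hX2 : 2 ≤ X.card := by
    have := Finset.card_pos.2 hXne; omega
  obtain ⟨a, haX, hnc⟩ := BTaux.exists_noncut hXconn hX2
  -- a has a neighbor in X
  obtain ⟨b₀, hb₀X, hab₀⟩ : ∃ b₀ ∈ X, G.Adj a b₀ := by
    obtain ⟨x, hx, hxa⟩ := Finset.exists_mem_ne (show 1 < X.card by omega) a
    obtain ⟨w, hw⟩ := hXconn a haX x hx
    cases w with
    | nil => exact absurd rfl hxa
    | cons h q => exact ⟨_, hw _ (by simp), h⟩
  -- private neighbor p of a
  have hnotdom : ¬ IsDomSet G ↑(X.erase a) := by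
    intro hd
    have hc : CDS (X.erase a) := ⟨hd, hnc⟩
    have := hmin _ hc
    rw [Finset.card_erase_of_mem haX] at this
    omega
  rw [IsDomSet] at hnotdom
  push_neg at hnotdom
  obtain ⟨p, hp1, hp2⟩ := hnotdom
  have hpriv : ∀ d ∈ X, d ≠ a → ¬ G.Adj p d := by
    intro d hd hda
    exact hp2 d (by simp [Finset.mem_erase, hda, hd])
  have hpa : G.Adj p a := by
    rcases hXdom p with h | ⟨d, hd, hadj⟩
    · have hpX : p ∈ X := by simpa using h
      have hpa' : p = a := by
        by_contra hne
        exact hp1 (by simp [Finset.mem_erase, hne, hpX])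
      exfalso
      subst hpa'
      exact hpriv b₀ hb₀X hab₀.ne' hab₀
    · have hdX : d ∈ X := by simpa using hd
      have hda : d = a := by
        by_contra hne
        exact hpriv d hdX hne hadj
      exact hda ▸ hadj
  have hpX : p ∉ X := by
    intro h
    have hpa' : p = a := by
      by_contra hne
      exact hp1 (by simp [Finset.mem_erase, hne, h])
    exact G.irrefl (hpa' ▸ hpa)
  -- the family of cliques in X containing a, maximizing dominated count inside U
  set KK : Finset (Finset V) :=
    X.powerset.filter (fun K => a ∈ K ∧ G.IsClique (↑K : Set V)) with hKK
  have hKKne : KK.Nonempty := by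
    refine ⟨{a}, Finset.mem_filter.2 ⟨Finset.mem_powerset.2 (by simpa using haX), by simp, ?_⟩⟩
    simp [SimpleGraph.isClique_iff, Set.pairwise_singleton]
  obtain ⟨Ks, hKs, hKmax⟩ := KK.exists_max_image
    (fun K => (Finset.univ.filter
      (fun v => (v ∈ K ∨ ∃ k ∈ K, G.Adj v k) ∧ ¬ G.Adj v a ∧ ¬ G.Adj v p)).card) hKKne
  obtain ⟨hKs1, haKs, hKscl⟩ := Finset.mem_filter.1 hKs
  have hKssub : Ks ⊆ X := Finset.mem_powerset.1 hKs1
  by_cases hdom : ∀ v : V, v ∈ Ks ∨ ∃ k ∈ Ks, G.Adj v k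
  · refine ⟨↑Ks, ?_, Or.inr ⟨⟨a, by simpa using haKs⟩, hKscl⟩⟩
    intro v
    rcases hdom v with h | ⟨k, hk, hadj⟩
    · exact Or.inl (by simpa using h)
    · exact Or.inr ⟨k, by simpa using hk, hadj⟩
  push_neg at hdom
  obtain ⟨w₀, hw₀K, hw₀adj⟩ := hdom
  by_cases hu : ∃ u, (u ∉ Ks ∧ ∀ k ∈ Ks, ¬ G.Adj u k) ∧ ¬ G.Adj u p
  · -- MACHINERY: derive False
    exfalso
    obtain ⟨u, ⟨huK, huadj⟩, hup⟩ := hu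
    have hupne : u ≠ p := by
      intro h
      exact huadj a haKs (h ▸ hpa)
    set T : Set ℕ :=
      {n | ∃ k ∈ Ks, ∃ ww : G.Walk u k, ww.length = n ∧ ∀ v ∈ ww.support, v ∈ insert u X}
      with hT
    have hTne : T.Nonempty := by
      rcases hXdom u with h | ⟨d, hd, hadj⟩
      · have huX : u ∈ X := by simpa using h
        obtain ⟨ww, hww⟩ := hXconn u huX a haX
        exact ⟨ww.length, a, haKs, ww, rfl,
          fun v hv => Finset.mem_insert.2 (Or.inr (hww v hv))⟩
      · have hdX : d ∈ X := by simpa using hd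
        obtain ⟨ww, hww⟩ := hXconn d hdX a haX
        refine ⟨_, a, haKs, SimpleGraph.Walk.cons hadj ww, rfl, ?_⟩
        intro v hv
        rw [SimpleGraph.Walk.support_cons] at hv
        rcases List.mem_cons.1 hv with h' | h'
        · exact h' ▸ Finset.mem_insert_self _ _
        · exact Finset.mem_insert.2 (Or.inr (hww v h'))
    obtain ⟨k₀, hk₀, w, hwl, hws⟩ := Nat.sInf_mem hTne
    set m := sInf T with hm
    have hmle : ∀ n ∈ T, m ≤ n := fun n hn => Nat.sInf_le hn
    have hadjy : ∀ i, i < m → G.Adj (w.getVert i) (w.getVert (i+1)) := by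
      intro i hi
      exact w.adj_getVert_succ (by omega)
    have hym : w.getVert m = k₀ := by
      rw [← hwl]; exact w.getVert_length
    have hyin : ∀ i, w.getVert i ∈ insert u X :=
      fun i => hws _ (BTaux.getVert_mem_support w i)
    have F2 : ∀ i k, i + 2 ≤ m → k ∈ Ks → ¬ G.Adj (w.getVert i) k := by
      intro i k hi hk hadj
      have hmem : (i + 1 : ℕ) ∈ T := by
        refine ⟨k, hk, (BTaux.wtake w i).concat hadj, ?_, ?_⟩
        · rw [SimpleGraph.Walk.length_concat, BTaux.length_wtake]; omega
        · intro v hv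
          rcases BTaux.mem_support_concat _ _ hv with h | h
          · exact hws v (BTaux.support_wtake w i v h)
          · subst h; exact Finset.mem_insert.2 (Or.inr (hKssub hk))
      have := hmle _ hmem; omega
    have F1 : ∀ i, i < m → w.getVert i ∉ Ks := by
      intro i hi hin
      have hmem : (i : ℕ) ∈ T :=
        ⟨_, hin, BTaux.wtake w i, by rw [BTaux.length_wtake]; omega,
          fun v hv => hws v (BTaux.support_wtake w i v hv)⟩
      have := hmle _ hmem; omega
    have Fp : ∀ i, i < m → ¬ G.Adj (w.getVert i) p ∧ w.getVert i ≠ p := by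
      intro i hi
      rcases Finset.mem_insert.1 (hyin i) with h | h
      · rw [h]
        exact ⟨hup, hupne⟩
      · have hne : w.getVert i ≠ a := fun hh => F1 i hi (hh ▸ haKs)
        exact ⟨fun hh => hpriv _ h hne hh.symm, fun hh => hpX (hh ▸ h)⟩
    have hm0 : m ≠ 0 := by
      intro h
      have he : u = k₀ := SimpleGraph.Walk.eq_of_length_eq_zero (p := w) (by omega)
      exact huK (he ▸ hk₀)
    have hm1 : m ≠ 1 := by
      intro h
      have h01 := hadjy 0 (by omega)
      rw [SimpleGraph.Walk.getVert_zero, show (0+1 : ℕ) = m by omega, hym] at h01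
      exact huadj k₀ hk₀ h01
    have hm2 : 2 ≤ m := by omega
    set z := w.getVert (m-1) with hzdef
    have hzk₀ : G.Adj z k₀ := by
      have h := hadjy (m-1) (by omega)
      rwa [show m-1+1 = m by omega, hym] at h
    have hzKs : z ∉ Ks := F1 _ (by omega)
    have hzu : z ≠ u := by
      intro h
      exact huadj k₀ hk₀ (h ▸ hzk₀)
    have hzX : z ∈ X := by
      rcases Finset.mem_insert.1 (hyin (m-1)) with h | h
      · exact absurd h hzu
      · exact h
    have hza' : z ≠ a := fun h => hzKs (h ▸ haKs)
    have hzp := Fp (m-1) (by omega)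
    have hm2' : m = 2 := by
      by_contra hm3'
      have hm3 : 3 ≤ m := by omega
      obtain ⟨i, hi⟩ : ∃ i, m = i + 3 := ⟨m - 3, by omega⟩
      have e1 : G.Adj (w.getVert i) (w.getVert (i+1)) := hadjy i (by omega)
      have e2 : G.Adj (w.getVert (i+1)) (w.getVert (i+2)) := hadjy (i+1) (by omega)
      have hz2 : w.getVert (i+2) = z := by rw [hzdef, show m-1 = i+2 by omega]
      rw [hz2] at e2
      have ns : ¬ G.Adj (w.getVert i) z := by
        intro hadj
        have hadj2 : G.Adj (w.getVert i) (w.getVert (i+2)) := by rw [hz2]; exact hadj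
        have hzk₀2 : G.Adj (w.getVert (i+2)) k₀ := by rw [hz2]; exact hzk₀
        have hmem : (i + 2 : ℕ) ∈ T := by
          refine ⟨k₀, hk₀, ((BTaux.wtake w i).concat hadj2).concat hzk₀2, ?_, ?_⟩
          · rw [SimpleGraph.Walk.length_concat, SimpleGraph.Walk.length_concat,
              BTaux.length_wtake]; omega
          · intro v hv
            rcases BTaux.mem_support_concat _ _ hv with h | h
            · rcases BTaux.mem_support_concat _ _ h with h' | h'
              · exact hws v (BTaux.support_wtake w i v h')
              · subst h'; exact hyin _
            · subst h; exact Finset.mem_insert.2 (Or.inr (hKssub hk₀))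
        have := hmle _ hmem; omega
      have d13 : w.getVert i ≠ z := by
        intro h
        exact F2 i k₀ (by omega) hk₀ (by rw [h]; exact hzk₀)
      by_cases hza : G.Adj z a
      · exact BTaux.p5 hP5 e1 e2 hza hpa.symm
          ns (F2 i a (by omega) haKs) (Fp i (by omega)).1
          (F2 (i+1) a (by omega) haKs) (Fp (i+1) (by omega)).1 hzp.1
          d13 (fun h => F1 i (by omega) (h ▸ haKs)) (Fp i (by omega)).2
          (fun h => F1 (i+1) (by omega) (h ▸ haKs)) (Fp (i+1) (by omega)).2 hzp.2
      · have hk₀a : k₀ ≠ a := by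
          intro h
          rw [h] at hzk₀
          exact hza hzk₀
        exact BTaux.p5 hP5 e1 e2 hzk₀
          (hKscl (by simpa using hk₀) (by simpa using haKs) hk₀a)
          ns (F2 i k₀ (by omega) hk₀) (F2 i a (by omega) haKs)
          (F2 (i+1) k₀ (by omega) hk₀) (F2 (i+1) a (by omega) haKs) hza
          d13 (fun h => F1 i (by omega) (by rw [h]; exact hk₀)) (fun h => F1 i (by omega) (h ▸ haKs))
          (fun h => F1 (i+1) (by omega) (by rw [h]; exact hk₀)) (fun h => F1 (i+1) (by omega) (h ▸ haKs))
          hza'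
    -- m = 2
    have huz : G.Adj u z := by
      have h := hadjy 0 (by omega)
      rw [SimpleGraph.Walk.getVert_zero, show (0+1 : ℕ) = m-1 by omega] at h
      exact h
    have hza : G.Adj z a := by
      by_contra hza
      have hk₀a : k₀ ≠ a := by
        intro h
        rw [h] at hzk₀
        exact hza hzk₀
      exact BTaux.p5 hP5 huz hzk₀
        (hKscl (by simpa using hk₀) (by simpa using haKs) hk₀a) hpa.symm
        (huadj k₀ hk₀) (huadj a haKs) hup hza hzp.1
        (fun h => hpriv k₀ (hKssub hk₀) hk₀a h.symm)
        (fun h => huK (h ▸ hk₀)) (fun h => huK (h ▸ haKs)) hupne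
        hza' hzp.2 (fun h => hpX (h ▸ hKssub hk₀))
    -- the swap clique K'
    set K' : Finset V := insert z (Ks.filter (fun k => G.Adj z k)) with hK'
    have hK'X : K' ⊆ X := by
      intro k hk
      rcases Finset.mem_insert.1 hk with h | h
      · exact h ▸ hzX
      · exact hKssub (Finset.mem_filter.1 h).1
    have haK' : a ∈ K' := Finset.mem_insert.2 (Or.inr (Finset.mem_filter.2 ⟨haKs, hza⟩))
    have hK'cl : G.IsClique (↑K' : Set V) := by
      intro x hx y hy hxy
      simp only [hK', Finset.coe_insert, Set.mem_insert_iff, Finset.mem_coe,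
        Finset.mem_filter] at hx hy
      rcases hx with rfl | ⟨hxK, hxz⟩
      · rcases hy with rfl | ⟨hyK, hyz⟩
        · exact absurd rfl hxy
        · exact hyz
      · rcases hy with rfl | ⟨hyK, hyz⟩
        · exact hxz.symm
        · exact hKscl (by simpa using hxK) (by simpa using hyK) hxy
    have hK'KK : K' ∈ KK :=
      Finset.mem_filter.2 ⟨Finset.mem_powerset.2 hK'X, haK', hK'cl⟩
    have hsub : Finset.univ.filter
        (fun v => (v ∈ Ks ∨ ∃ k ∈ Ks, G.Adj v k) ∧ ¬ G.Adj v a ∧ ¬ G.Adj v p)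
        ⊆ Finset.univ.filter
        (fun v => (v ∈ K' ∨ ∃ k ∈ K', G.Adj v k) ∧ ¬ G.Adj v a ∧ ¬ G.Adj v p) := by
      intro v₀ hv₀
      obtain ⟨-, hv₀N, hv₀a, hv₀p⟩ := Finset.mem_filter.1 hv₀
      rw [Finset.mem_filter]
      refine ⟨Finset.mem_univ _, ?_, hv₀a, hv₀p⟩
      by_contra hcon
      push_neg at hcon
      obtain ⟨hv₀K', hv₀adj'⟩ := hcon
      have nv₀z : ¬ G.Adj v₀ z := hv₀adj' z (Finset.mem_insert_self _ _)
      have hv₀zne : v₀ ≠ z := fun h => hv₀K' (h ▸ Finset.mem_insert_self _ _)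
      have hv₀nea : v₀ ≠ a := fun h => hv₀p (h ▸ hpa.symm)
      have hv₀nep : v₀ ≠ p := fun h => hv₀a (h ▸ hpa)
      rcases hv₀N with h | ⟨kj, hkj, hv₀kj⟩
      · exact hv₀a (hKscl (by simpa using h) (by simpa using haKs) hv₀nea)
      · have hkja : kj ≠ a := fun h => hv₀a (h ▸ hv₀kj)
        have nzkj : ¬ G.Adj z kj := fun h =>
          hv₀adj' kj (Finset.mem_insert.2 (Or.inr (Finset.mem_filter.2 ⟨hkj, h⟩))) hv₀kj
        have hv₀u : ¬ G.Adj v₀ u := by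
          intro hadj
          exact BTaux.p5 hP5 hadj huz hza hpa.symm
            nv₀z hv₀a hv₀p (huadj a haKs) hup hzp.1
            hv₀zne hv₀nea hv₀nep (fun h => huK (h ▸ haKs)) hupne hzp.2
        exact BTaux.p5 hP5 hv₀kj
          (hKscl (by simpa using hkj) (by simpa using haKs) hkja) hza.symm huz.symm
          hv₀a nv₀z hv₀u (fun h => nzkj h.symm) (fun h => huadj kj hkj h.symm)
          (fun h => huadj a haKs h.symm)
          hv₀nea hv₀zne (fun h => huadj kj hkj (h ▸ hv₀kj))
          (fun h => hzKs (h ▸ hkj)) (fun h => huK (h ▸ hkj)) (fun h => huK (h ▸ haKs))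
    have humem : u ∈ Finset.univ.filter
        (fun v => (v ∈ K' ∨ ∃ k ∈ K', G.Adj v k) ∧ ¬ G.Adj v a ∧ ¬ G.Adj v p) := by
      rw [Finset.mem_filter]
      exact ⟨Finset.mem_univ _, Or.inr ⟨z, Finset.mem_insert_self _ _, huz⟩,
        huadj a haKs, hup⟩
    have hunmem : u ∉ Finset.univ.filter
        (fun v => (v ∈ Ks ∨ ∃ k ∈ Ks, G.Adj v k) ∧ ¬ G.Adj v a ∧ ¬ G.Adj v p) := by
      rw [Finset.mem_filter]
      rintro ⟨-, h | ⟨k, hk, hadj⟩, -⟩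
      · exact huK (by simpa using h)
      · exact huadj k hk hadj
    have hlt := Finset.card_lt_card
      ((Finset.ssubset_iff_of_subset hsub).2 ⟨u, humem, hunmem⟩)
    have hle := hKmax K' hK'KK
    omega
  · -- the dominating P3 {w₀, p, a}
    push_neg at hu
    have hw₀p : G.Adj w₀ p := hu w₀ ⟨hw₀K, hw₀adj⟩
    refine ⟨{w₀, p, a}, ?_, Or.inl ⟨w₀, p, a, rfl, hw₀p.ne,
      fun h => hw₀K (h ▸ haKs), hpa.ne, hw₀p, hpa, hw₀adj a haKs⟩⟩
    intro t
    by_cases htK : t ∉ Ks ∧ ∀ k ∈ Ks, ¬ G.Adj t k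
    · exact Or.inr ⟨p, by simp, hu t htK⟩
    · rw [not_and_or] at htK
      by_cases hta : t = a
      · exact Or.inl (by simp [hta])
      rcases htK with h | h
      · push_neg at h
        exact Or.inr ⟨a, by simp, hKscl (by simpa using h) (by simpa using haKs) hta⟩
      · push_neg at h
        obtain ⟨k, hk, htk⟩ := h
        by_cases hka : k = a
        · exact Or.inr ⟨a, by simp, hka ▸ htk⟩
        by_contra hcon
        push_neg at hcon
        obtain ⟨htD, htadj⟩ := hcon
        have ntw₀ : ¬ G.Adj t w₀ := htadj w₀ (by simp)
        have ntp : ¬ G.Adj t p := htadj p (by simp)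
        have nta : ¬ G.Adj t a := htadj a (by simp)
        exact BTaux.p5 hP5 hw₀p hpa
          (hKscl (by simpa using haKs) (by simpa using hk) (fun hh => hka hh.symm))
          htk.symm
          (hw₀adj a haKs) (hw₀adj k hk) (fun hh => ntw₀ hh.symm)
          (hpriv k (hKssub hk) hka) (fun hh => ntp hh.symm) (fun hh => nta hh.symm)
          (fun hh => hw₀K (hh ▸ haKs)) (fun hh => hw₀K (hh ▸ hk))
          (fun hh => hw₀adj k hk (hh ▸ htk))
          (fun hh => hpX (hh ▸ hKssub hk))
          (fun hh => hpriv k (hKssub hk) hka (hh ▸ htk))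
          (fun hh => hta hh.symm)
end

section
/- Let k ≥ 1, let G be a finite nonempty connected P5-free simple graph, and let c : V(G) → {1,…,k} be a proper coloring of G (adjacent vertices receive different colors) such that every color class c^{-1}(r) is nonempty. Then G has a dominating set D such that the subgraph of G induced on D is connected, |D| ≤ k+1, and D ∩ c^{-1}(r) ≠ ∅ for every r ∈ {1,…,k}. -/
section Aux

variable {V : Type*} {G : SimpleGraph V}

/-- Reachability within a set `S`. -/
inductive RW (G : SimpleGraph V) (S : Set V) : V → V → Prop
  | refl {a : V} (h : a ∈ S) : RW G S a a
  | tail {a b c : V} (h : RW G S a b) (hadj : G.Adj b c) (hc : c ∈ S) : RW G S a c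

namespace RW

lemma left_mem {S : Set V} {a b : V} (h : RW G S a b) : a ∈ S := by
  induction h with
  | refl h => exact h
  | tail _ _ _ ih => exact ih

lemma right_mem {S : Set V} {a b : V} (h : RW G S a b) : b ∈ S := by
  cases h with
  | refl h => exact h
  | tail _ _ hc => exact hc

lemma trans {S : Set V} {a b c : V} (h1 : RW G S a b) (h2 : RW G S b c) : RW G S a c := by
  induction h2 with
  | refl _ => exact h1
  | tail _ hadj hc ih => exact RW.tail ih hadj hc

lemma head {S : Set V} {a b c : V} (ha : a ∈ S) (hadj : G.Adj a b) (h : RW G S b c) :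
    RW G S a c := by
  induction h with
  | refl h => exact RW.tail (RW.refl ha) hadj h
  | tail _ hadj' hc ih => exact RW.tail ih hadj' hc

lemma symm {S : Set V} {a b : V} (h : RW G S a b) : RW G S b a := by
  induction h with
  | refl h => exact RW.refl h
  | tail h hadj hc ih => exact RW.head hc hadj.symm ih

lemma single {S : Set V} {a b : V} (ha : a ∈ S) (hb : b ∈ S) (hadj : G.Adj a b) :
    RW G S a b := RW.tail (RW.refl ha) hadj hb

lemma mono {S T : Set V} {a b : V} (hST : S ⊆ T) (h : RW G S a b) : RW G T a b := by
  induction h with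
  | refl h => exact RW.refl (hST h)
  | tail _ hadj hc ih => exact RW.tail ih hadj (hST hc)

end RW

/-- Connectivity of the induced subgraph on `S`, via `RW`. -/
def MyConn (G : SimpleGraph V) (S : Set V) : Prop :=
  S.Nonempty ∧ ∀ a ∈ S, ∀ b ∈ S, RW G S a b

lemma rw_to_reachable {S : Set V} {a b : V} (h : RW G S a b) :
    ∀ (ha : a ∈ S) (hb : b ∈ S), (G.induce S).Reachable ⟨a, ha⟩ ⟨b, hb⟩ := by
  induction h with
  | refl _ => intro ha hb; exact SimpleGraph.Reachable.refl _
  | tail h hadj hc ih =>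
      intro ha hb
      exact (ih ha h.right_mem).trans
        (SimpleGraph.Adj.reachable (by exact hadj : (G.induce S).Adj ⟨_, h.right_mem⟩ ⟨_, hb⟩))

lemma myConn_induce {S : Set V} (h : MyConn G S) : (G.induce S).Connected := by
  have : Nonempty S := h.1.to_subtype
  exact ⟨fun a b => rw_to_reachable (h.2 a.1 a.2 b.1 b.2) a.2 b.2⟩

lemma walk_to_rw {a b : V} (w : G.Walk a b) : RW G Set.univ a b := by
  induction w with
  | nil => exact RW.refl (Set.mem_univ _)
  | cons hadj _ ih => exact RW.head (Set.mem_univ _) hadj ih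

lemma myConn_univ [Nonempty V] (h : G.Connected) : MyConn G Set.univ := by
  refine ⟨Set.univ_nonempty, fun a _ b _ => ?_⟩
  obtain ⟨w⟩ := h.preconnected a b
  exact walk_to_rw w

lemma myConn_extend {S T : Set V} (h : MyConn G S) (hST : S ⊆ T)
    (hdom : ∀ v ∈ T, v ∈ S ∨ ∃ d ∈ S, G.Adj v d) : MyConn G T := by
  obtain ⟨⟨s0, hs0⟩, hconn⟩ := h
  have anchor : ∀ v ∈ T, ∃ s ∈ S, RW G T v s := by
    intro v hv
    rcases hdom v hv with hvS | ⟨d, hd, hadj⟩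
    · exact ⟨v, hvS, RW.refl hv⟩
    · exact ⟨d, hd, RW.single hv (hST hd) hadj⟩
  refine ⟨⟨s0, hST hs0⟩, fun a ha b hb => ?_⟩
  obtain ⟨sa, hsa, hra⟩ := anchor a ha
  obtain ⟨sb, hsb, hrb⟩ := anchor b hb
  exact hra.trans (((hconn sa hsa sb hsb).mono hST).trans hrb.symm)

/-- From a path on 5 vertices with the right (non-)adjacencies, contradict P5-freeness. -/
lemma p5_helper (hP5 : IsP5Free G) {a b c d e : V}
    (h1 : G.Adj a b) (h2 : G.Adj b c) (h3 : G.Adj c d) (h4 : G.Adj d e)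
    (n1 : ¬ G.Adj a c) (n2 : ¬ G.Adj a d) (n3 : ¬ G.Adj a e)
    (n4 : ¬ G.Adj b d) (n5 : ¬ G.Adj b e) (n6 : ¬ G.Adj c e) : False := by
  have hab : a ≠ b := h1.ne
  have hbc : b ≠ c := h2.ne
  have hcd : c ≠ d := h3.ne
  have hde : d ≠ e := h4.ne
  have hac : a ≠ c := fun h => n2 (h ▸ h3)
  have had : a ≠ d := fun h => n3 (h ▸ h4)
  have hae : a ≠ e := fun h => n5 (h ▸ h1.symm)
  have hbd : b ≠ d := fun h => n5 (h ▸ h4)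
  have hbe : b ≠ e := fun h => n6 (h ▸ h2.symm)
  have hce : c ≠ e := fun h => n5 (h ▸ h2)
  have n1' : ¬ G.Adj c a := fun h => n1 h.symm
  have n2' : ¬ G.Adj d a := fun h => n2 h.symm
  have n3' : ¬ G.Adj e a := fun h => n3 h.symm
  have n4' : ¬ G.Adj d b := fun h => n4 h.symm
  have n5' : ¬ G.Adj e b := fun h => n5 h.symm
  have n6' : ¬ G.Adj e c := fun h => n6 h.symm
  apply hP5
  refine ⟨![a, b, c, d, e], ?_, ?_⟩
  · intro i j hij
    fin_cases i <;> fin_cases j <;> simp_all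
  · intro i j
    fin_cases i <;> fin_cases j <;>
      simp [h1, h2, h3, h4, h1.symm, h2.symm, h3.symm, h4.symm,
        n1, n2, n3, n4, n5, n6, n1', n2', n3', n4', n5', n6']

/-- Walk-avoidance: from a walk in `S` starting at `w ≠ a`, either reach the end avoiding `a`,
or reach (avoiding `a`) some vertex adjacent to `a`. -/
lemma rw_avoid {S : Set V} {a w y : V} (h : RW G S w y) (hw : w ≠ a) :
    ∃ z, z ∈ S ∧ z ≠ a ∧ RW G (S \ {a}) w z ∧ (z = y ∨ G.Adj z a) := by
  induction h with
  | refl h => exact ⟨w, h, hw, RW.refl ⟨h, hw⟩, Or.inl rfl⟩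
  | tail h hadj hc ih =>
      obtain ⟨z, hzS, hza, hrw, hz⟩ := ih
      rename_i b cc
      by_cases hca : cc = a
      · rcases hz with rfl | hzadj
        · exact ⟨z, hzS, hza, hrw, Or.inr (hca ▸ hadj)⟩
        · exact ⟨z, hzS, hza, hrw, Or.inr hzadj⟩
      · rcases hz with rfl | hzadj
        · exact ⟨cc, hc, hca, RW.tail hrw hadj ⟨hc, hca⟩, Or.inl rfl⟩
        · exact ⟨z, hzS, hza, hrw, Or.inr hzadj⟩

end Aux

section Core

variable {V : Type*} [DecidableEq V] {G : SimpleGraph V}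

/-- The main structural lemma: in a `P5`-free graph, a connected dominating set that is
minimal (each one-vertex-deleted set fails) has at most one non-edge. -/
lemma core_key (hP5 : IsP5Free G) (X : Finset V)
    (hdom : ∀ v, v ∈ X ∨ ∃ d ∈ X, G.Adj v d)
    (hXconn : MyConn G (↑X : Set V))
    (hmin : ∀ x ∈ X, ¬ ((∀ v, v ∈ X.erase x ∨ ∃ d ∈ X.erase x, G.Adj v d) ∧
              MyConn G (↑(X.erase x) : Set V))) :
    ∀ a ∈ X, ∀ b ∈ X, ∀ c ∈ X, ∀ d ∈ X, ¬ G.Adj a b → ¬ G.Adj c d → a ≠ b → c ≠ d →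
      ((a = c ∧ b = d) ∨ (a = d ∧ b = c)) := by
  classical
  -- every vertex of X (with a companion) has a neighbor in X
  have hnbr : ∀ x ∈ X, ∀ y ∈ X, x ≠ y → ∃ z ∈ X, z ≠ x ∧ G.Adj x z := by
    intro x hx y hy hxy
    have h := (hXconn.2 y hy x hx)
    cases h with
    | refl _ => exact absurd rfl hxy.symm
    | tail h hadj _ =>
        exact ⟨_, h.right_mem, fun he => (G.loopless.irrefl x (he ▸ hadj)).elim,
          hadj.symm⟩
  -- dichotomy: private neighbor or disconnection
  have hdich : ∀ x ∈ X, (X.erase x).Nonempty →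
      (∃ u, G.Adj x u ∧ ∀ y ∈ X, y ≠ x → ¬ G.Adj u y ∧ u ≠ y) ∨
      (∃ s ∈ X.erase x, ∃ t ∈ X.erase x, ¬ RW G (↑(X.erase x) : Set V) s t) := by
    intro x hx ⟨y0, hy0⟩
    have h := hmin x hx
    by_cases hd : ∀ v, v ∈ X.erase x ∨ ∃ d ∈ X.erase x, G.Adj v d
    · right
      have hcn : ¬ MyConn G (↑(X.erase x) : Set V) := fun hc => h ⟨hd, hc⟩
      rw [MyConn, not_and_or] at hcn
      rcases hcn with hne | hcn
      · exact absurd ⟨y0, by exact_mod_cast hy0⟩ hne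
      · push_neg at hcn
        obtain ⟨s, hs, t, ht, hst⟩ := hcn
        exact ⟨s, by exact_mod_cast hs, t, by exact_mod_cast ht, hst⟩
    · left
      push_neg at hd
      obtain ⟨u, huer, hunadj⟩ := hd
      rcases hdom u with huX | ⟨d, hdX, hadj⟩
      · -- u ∈ X, so u = x
        have hux : u = x := by
          by_contra hne
          exact huer (Finset.mem_erase.mpr ⟨hne, huX⟩)
        subst hux
        obtain ⟨z, hz, hzu, hadj⟩ := hnbr u huX y0 (Finset.mem_of_mem_erase hy0)
          (fun he => (Finset.mem_erase.mp hy0).1 he.symm)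
        exact absurd hadj (hunadj z (Finset.mem_erase.mpr ⟨hzu, hz⟩))
      · have hdx : d = x := by
          by_contra hne
          exact hunadj d (Finset.mem_erase.mpr ⟨hne, hdX⟩) hadj
        subst hdx
        refine ⟨u, hadj.symm, fun y hy hyx => ⟨?_, ?_⟩⟩
        · exact hunadj y (Finset.mem_erase.mpr ⟨hyx, hy⟩)
        · intro he
          exact huer (he ▸ Finset.mem_erase.mpr ⟨hyx, hy⟩)
  -- no induced P4 inside X
  have claim1 : ∀ a ∈ X, ∀ p ∈ X, ∀ q ∈ X, ∀ r ∈ X,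
      G.Adj a p → G.Adj p q → G.Adj q r → ¬ G.Adj a q → ¬ G.Adj a r → ¬ G.Adj p r →
      False := by
    intro a ha p hp q hq r hr hap hpq hqr naq nar npr
    have hqa : q ≠ a := fun he => nar (he ▸ hqr)
    have hra : r ≠ a := fun he => naq ((he ▸ hqr).symm)
    have hpa : p ≠ a := fun he => (G.loopless.irrefl a (he ▸ hap)).elim
    have hper : p ∈ X.erase a := Finset.mem_erase.mpr ⟨hpa, hp⟩
    have hqer : q ∈ X.erase a := Finset.mem_erase.mpr ⟨hqa, hq⟩
    have hrer : r ∈ X.erase a := Finset.mem_erase.mpr ⟨hra, hr⟩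
    rcases hdich a ha ⟨p, hper⟩ with ⟨u, hau, hu⟩ | ⟨s, hs, t, ht, hst⟩
    · exact p5_helper hP5 hau.symm hap hpq hqr
        (hu p hp hpa).1 (hu q hq hqa).1 (hu r hr hra).1 naq nar npr
    · -- pick w0 with no RW to p within the erased set
      have hcoe : (↑(X.erase a) : Set V) = (↑X : Set V) \ {a} := Finset.coe_erase a X
      obtain ⟨w0, hw0er, hw0p⟩ : ∃ w0 ∈ X.erase a, ¬ RW G (↑(X.erase a) : Set V) w0 p := by
        by_cases hsp : RW G (↑(X.erase a) : Set V) s p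
        · refine ⟨t, ht, fun htp => hst (hsp.trans htp.symm)⟩
        · exact ⟨s, hs, hsp⟩
      have hw0X : w0 ∈ X := Finset.mem_of_mem_erase hw0er
      have hw0a : w0 ≠ a := (Finset.mem_erase.mp hw0er).1
      obtain ⟨z, hzX, hza, hrw, hz⟩ :=
        rw_avoid (G := G) (a := a) (hXconn.2 w0 hw0X p hp) hw0a
      rw [← hcoe] at hrw
      have hzer : z ∈ X.erase a := Finset.mem_erase.mpr ⟨hza, by exact_mod_cast hzX⟩
      rcases hz with rfl | hzadj
      · exact hw0p hrw
      · have hnzp : ¬ RW G (↑(X.erase a) : Set V) z p := fun hzp => hw0p (hrw.trans hzp)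
        have nzp : ¬ G.Adj z p := fun hadj => hnzp (RW.single hzer hper hadj)
        have nzq : ¬ G.Adj z q := fun hadj =>
          hnzp ((RW.single hzer hqer hadj).trans (RW.single hqer hper hpq.symm))
        have nzr : ¬ G.Adj z r := fun hadj =>
          hnzp (((RW.single hzer hrer hadj).trans (RW.single hrer hqer hqr.symm)).trans
            (RW.single hqer hper hpq.symm))
        exact p5_helper hP5 hzadj hap hpq hqr nzp nzq nzr naq nar npr
  -- common neighbor for non-adjacent pairs
  have cn : ∀ a ∈ X, ∀ b ∈ X, a ≠ b → ¬ G.Adj a b →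
      ∃ m ∈ X, G.Adj a m ∧ G.Adj m b := by
    intro a ha b hb hab hnadj
    have key : ∀ y, RW G (↑X : Set V) a y → a ≠ y → ¬ G.Adj a y →
        ∃ m ∈ X, G.Adj a m ∧ G.Adj m y := by
      intro y h
      induction h with
      | refl _ => intro hab _; exact absurd rfl hab
      | tail h hadj hc ih =>
          rename_i b' cc
          intro hac hnac
          by_cases hba : b' = a
          · subst hba; exact absurd hadj hnac
          · by_cases haB : G.Adj a b'
            · exact ⟨b', Finset.mem_coe.mp h.right_mem, haB, hadj⟩
            · obtain ⟨m, hm, ham, hmb⟩ := ih (fun he => hba he.symm) haB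
              by_cases hmc : G.Adj m cc
              · exact ⟨m, hm, ham, hmc⟩
              · exact (claim1 a ha m hm b' (Finset.mem_coe.mp h.right_mem)
                  cc (Finset.mem_coe.mp hc) ham hmb hadj haB hnac hmc).elim
    exact key b (hXconn.2 a ha b hb) hab hnadj
  -- every endpoint of a non-edge has a private neighbor
  have priv : ∀ a ∈ X, ∀ b ∈ X, a ≠ b → ¬ G.Adj a b →
      ∃ u, G.Adj a u ∧ ∀ y ∈ X, y ≠ a → ¬ G.Adj u y ∧ u ≠ y := by
    intro a ha b hb hab hnadj
    have hber : b ∈ X.erase a := Finset.mem_erase.mpr ⟨fun h => hab h.symm, hb⟩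
    rcases hdich a ha ⟨b, hber⟩ with h | ⟨s, hs, t, ht, hst⟩
    · exact h
    · exfalso
      obtain ⟨m, hm, ham, hmb⟩ := cn a ha b hb hab hnadj
      have hma : m ≠ a := fun he => (G.loopless.irrefl a (he ▸ ham)).elim
      have hmer : m ∈ X.erase a := Finset.mem_erase.mpr ⟨hma, hm⟩
      have hcoe : (↑(X.erase a) : Set V) = (↑X : Set V) \ {a} := Finset.coe_erase a X
      obtain ⟨w0, hw0er, hw0b⟩ : ∃ w0 ∈ X.erase a, ¬ RW G (↑(X.erase a) : Set V) w0 b := by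
        by_cases hsb : RW G (↑(X.erase a) : Set V) s b
        · exact ⟨t, ht, fun htb => hst (hsb.trans htb.symm)⟩
        · exact ⟨s, hs, hsb⟩
      have hw0X : w0 ∈ X := Finset.mem_of_mem_erase hw0er
      have hw0a : w0 ≠ a := (Finset.mem_erase.mp hw0er).1
      obtain ⟨z, hzX, hza, hrw, hz⟩ :=
        rw_avoid (G := G) (a := a) (hXconn.2 w0 hw0X b hb) hw0a
      rw [← hcoe] at hrw
      have hzer : z ∈ X.erase a := Finset.mem_erase.mpr ⟨hza, by exact_mod_cast hzX⟩
      rcases hz with rfl | hzadj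
      · exact hw0b hrw
      · have hnzb : ¬ RW G (↑(X.erase a) : Set V) z b := fun hzb => hw0b (hrw.trans hzb)
        have nzb : ¬ G.Adj z b := fun hadj => hnzb (RW.single hzer hber hadj)
        have nzm : ¬ G.Adj z m := fun hadj =>
          hnzb ((RW.single hzer hmer hadj).trans (RW.single hmer hber hmb))
        exact claim1 z (by exact_mod_cast hzX) a ha m hm b hb hzadj ham hmb nzm nzb hnadj
  -- privates of the two ends of a non-edge are adjacent
  have privadj : ∀ a ∈ X, ∀ b ∈ X, a ≠ b → ¬ G.Adj a b →
      ∀ u v : V, G.Adj a u → (∀ y ∈ X, y ≠ a → ¬ G.Adj u y ∧ u ≠ y) →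
        G.Adj b v → (∀ y ∈ X, y ≠ b → ¬ G.Adj v y ∧ v ≠ y) → G.Adj u v := by
    intro a ha b hb hab hnadj u v hau hu hbv hv
    by_contra hnuv
    obtain ⟨m, hm, ham, hmb⟩ := cn a ha b hb hab hnadj
    have hma : m ≠ a := ham.ne'
    have hmb' : m ≠ b := hmb.ne
    exact p5_helper hP5 hau.symm ham hmb hbv
      (hu m hm hma).1 (hu b hb (fun h => hab h.symm)).1 hnuv
      hnadj (fun h => (hv a ha hab).1 h.symm) (fun h => (hv m hm hmb').1 h.symm)
  -- shared-vertex case: non-edges {x,y} and {y,z} lead to a contradiction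
  have SH : ∀ x ∈ X, ∀ y ∈ X, ∀ z ∈ X, ¬ G.Adj y x → ¬ G.Adj y z →
      x ≠ y → y ≠ z → x ≠ z → False := by
    intro x hx y hy z hz nyx nyz hxy hyz hxz
    have nxy : ¬ G.Adj x y := fun h => nyx h.symm
    have nzy : ¬ G.Adj z y := fun h => nyz h.symm
    have hyx : y ≠ x := hxy.symm
    have hzy : z ≠ y := hyz.symm
    have hzx : z ≠ x := hxz.symm
    by_cases hadj : G.Adj x z
    · -- P5 : z - x - u_x - u_y - y
      obtain ⟨ux, hxux, hux⟩ := priv x hx y hy hxy nxy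
      obtain ⟨uy, hyuy, huy⟩ := priv y hy x hx hyx nyx
      have huu : G.Adj ux uy := privadj x hx y hy hxy nxy ux uy hxux hux hyuy huy
      exact p5_helper hP5 hadj.symm hxux huu hyuy.symm
        (fun h => (hux z hz hzx).1 h.symm)
        (fun h => (huy z hz hzy).1 h.symm)
        nzy
        (fun h => (huy x hx hxy).1 h.symm)
        nxy
        (hux y hy hyx).1
    · -- P5 : x - m - y - u_y - u_z
      obtain ⟨m, hm, hxm, hmy⟩ := cn x hx y hy hxy nxy
      obtain ⟨uy, hyuy, huy⟩ := priv y hy z hz hyz nyz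
      obtain ⟨uz, hzuz, huz⟩ := priv z hz y hy hzy nzy
      have huu : G.Adj uy uz := privadj y hy z hz hyz nyz uy uz hyuy huy hzuz huz
      have hmy' : m ≠ y := hmy.ne
      have hmz : m ≠ z := fun he => hadj (he ▸ hxm)
      exact p5_helper hP5 hxm hmy hyuy huu
        nxy
        (fun h => (huy x hx hxy).1 h.symm)
        (fun h => (huz x hx hxz).1 h.symm)
        (fun h => (huy m hm hmy').1 h.symm)
        (fun h => (huz m hm hmz).1 h.symm)
        (fun h => (huz y hy hyz).1 h.symm)
  -- cross rule for disjoint non-edges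
  have DJc : ∀ a ∈ X, ∀ b ∈ X, ∀ cc ∈ X, ∀ d ∈ X, ¬ G.Adj a b → a ≠ b →
      G.Adj a d → G.Adj d b → a ≠ cc → b ≠ cc → d ≠ cc →
      ∀ ub uc : V, G.Adj b ub → (∀ y ∈ X, y ≠ b → ¬ G.Adj ub y ∧ ub ≠ y) →
        G.Adj cc uc → (∀ y ∈ X, y ≠ cc → ¬ G.Adj uc y ∧ uc ≠ y) →
      ¬ G.Adj ub uc := by
    intro a ha b hb cc hc d hd nab hab had hdb hac hbc hdc ub uc hbub hub hcuc huc huu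
    exact p5_helper hP5 had hdb hbub huu
      nab
      (fun h => (hub a ha hab).1 h.symm)
      (fun h => (huc a ha hac).1 h.symm)
      (fun h => (hub d hd hdb.ne).1 h.symm)
      (fun h => (huc d hd hdc).1 h.symm)
      (fun h => (huc b hb hbc).1 h.symm)
  -- disjoint non-edges with all cross edges present
  have DJ : ∀ a ∈ X, ∀ b ∈ X, ∀ cc ∈ X, ∀ d ∈ X, ¬ G.Adj a b → ¬ G.Adj cc d →
      a ≠ b → cc ≠ d → G.Adj a cc → G.Adj a d → G.Adj b cc → G.Adj b d → False := by
    intro a ha b hb cc hc d hd nab ncd hab hcd gac gad gbc gbd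
    obtain ⟨ua, haua, hua⟩ := priv a ha b hb hab nab
    obtain ⟨ub, hbub, hub⟩ := priv b hb a ha hab.symm (fun h => nab h.symm)
    obtain ⟨uc, hcuc, huc⟩ := priv cc hc d hd hcd ncd
    have huab : G.Adj ua ub := privadj a ha b hb hab nab ua ub haua hua hbub hub
    have nbc : ¬ G.Adj ub uc :=
      DJc a ha b hb cc hc d hd nab hab gad gbd.symm gac.ne gbc.ne hcd.symm
        ub uc hbub hub hcuc huc
    have nac : ¬ G.Adj ua uc :=
      DJc b hb a ha cc hc d hd (fun h => nab h.symm) hab.symm gbd gad.symm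
        gbc.ne gac.ne hcd.symm ua uc haua hua hcuc huc
    exact p5_helper hP5 huab hbub.symm gbc hcuc
      (hua b hb hab.symm).1
      (hua cc hc gac.ne').1
      nac
      (hub cc hc gbc.ne').1
      nbc
      (fun h => (huc b hb gbc.ne).1 h.symm)
  -- final assembly
  intro a ha b hb cc hc d hd nab ncd hab hcd
  by_cases h1 : a = cc
  · by_cases h2 : b = d
    · exact Or.inl ⟨h1, h2⟩
    · subst h1
      exact (SH b hb a ha d hd nab ncd hab.symm hcd h2).elim
  · by_cases h2 : a = d
    · by_cases h3 : b = cc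
      · exact Or.inr ⟨h2, h3⟩
      · subst h2
        exact (SH b hb a ha cc hc nab (fun h => ncd h.symm) hab.symm h1 h3).elim
    · exfalso
      by_cases h3 : b = cc
      · subst h3
        exact SH a ha b hb d hd (fun h => nab h.symm) ncd hab hcd h2
      · by_cases h4 : b = d
        · subst h4
          exact SH a ha b hb cc hc (fun h => nab h.symm) (fun h => ncd h.symm) hab h3 h1
        · by_cases g1 : G.Adj a cc
          · by_cases g2 : G.Adj a d
            · by_cases g3 : G.Adj b cc
              · by_cases g4 : G.Adj b d
                · exact DJ a ha b hb cc hc d hd nab ncd hab hcd g1 g2 g3 g4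
                · exact SH a ha b hb d hd (fun h => nab h.symm) g4 hab h4 h2
              · exact SH a ha b hb cc hc (fun h => nab h.symm) g3 hab h3 h1
            · exact SH b hb a ha d hd nab g2 hab.symm h2 h4
          · exact SH b hb a ha cc hc nab g1 hab.symm h1 h3

end Core

theorem stmt2 {V : Type*} [Fintype V] (k : ℕ) (hk : 1 ≤ k)
    (G : SimpleGraph V) (hconn : G.Connected) (hP5 : IsP5Free G)
    (c : V → Fin k)
    (hproper : ∀ u v : V, G.Adj u v → c u ≠ c v)
    (hsurj : ∀ r : Fin k, ∃ v : V, c v = r) :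
    ∃ D : Finset V, IsDomSet G ↑D ∧ (G.induce (↑D : Set V)).Connected ∧
      D.card ≤ k + 1 ∧ ∀ r : Fin k, ∃ d ∈ D, c d = r := by
  classical
  have hV : Nonempty V := hconn.nonempty
  -- choose a minimum connected dominating set X
  let good : Finset V → Prop := fun Y =>
    (∀ v, v ∈ Y ∨ ∃ d ∈ Y, G.Adj v d) ∧ MyConn G (↑Y : Set V)
  have huniv : good Finset.univ := by
    refine ⟨fun v => Or.inl (Finset.mem_univ v), ?_⟩
    rw [Finset.coe_univ]
    exact myConn_univ hconn
  have hsne : ((Finset.univ : Finset (Finset V)).filter good).Nonempty :=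
    ⟨Finset.univ, Finset.mem_filter.mpr ⟨Finset.mem_univ _, huniv⟩⟩
  obtain ⟨X, hXmem, hXmin⟩ :=
    Finset.exists_min_image ((Finset.univ : Finset (Finset V)).filter good)
      Finset.card hsne
  have hXgood : good X := (Finset.mem_filter.mp hXmem).2
  have hXdom : ∀ v, v ∈ X ∨ ∃ d ∈ X, G.Adj v d := hXgood.1
  have hXconn : MyConn G (↑X : Set V) := hXgood.2
  have hmin : ∀ x ∈ X, ¬ ((∀ v, v ∈ X.erase x ∨ ∃ d ∈ X.erase x, G.Adj v d) ∧
      MyConn G (↑(X.erase x) : Set V)) := by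
    intro x hx hg
    have hle := hXmin (X.erase x)
      (Finset.mem_filter.mpr ⟨Finset.mem_univ _, hg⟩)
    have hlt : (X.erase x).card < X.card := Finset.card_erase_lt_of_mem hx
    omega
  have key := core_key hP5 X hXdom hXconn hmin
  -- the colors on X
  set A : Finset (Fin k) := X.image c with hA
  have hXcard : X.card ≤ A.card + 1 := by
    by_cases hne : ∃ a ∈ X, ∃ b ∈ X, a ≠ b ∧ ¬ G.Adj a b
    · obtain ⟨a, ha, b, hb, hab, hnab⟩ := hne
      have hinj : Set.InjOn c (↑(X.erase b) : Set V) := by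
        intro u hu v hv hcuv
        by_contra hne'
        have huE : u ∈ X.erase b := Finset.mem_coe.mp hu
        have hvE : v ∈ X.erase b := Finset.mem_coe.mp hv
        have huX : u ∈ X := Finset.mem_of_mem_erase huE
        have hvX : v ∈ X := Finset.mem_of_mem_erase hvE
        by_cases hadj : G.Adj u v
        · exact hproper u v hadj hcuv
        · rcases key u huX v hvX a ha b hb hadj hnab hne' hab with ⟨_, h2⟩ | ⟨h1, _⟩
          · exact (Finset.mem_erase.mp hvE).1 h2
          · exact (Finset.mem_erase.mp huE).1 h1
      have h1 : ((X.erase b).image c).card = (X.erase b).card :=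
        Finset.card_image_of_injOn hinj
      have h2 : (X.erase b).image c ⊆ A :=
        Finset.image_subset_image (Finset.erase_subset _ _)
      have h3 : (X.erase b).card = X.card - 1 := Finset.card_erase_of_mem hb
      have h4 : ((X.erase b).image c).card ≤ A.card := Finset.card_le_card h2
      have h5 : 0 < X.card := Finset.card_pos.mpr ⟨a, ha⟩
      omega
    · push_neg at hne
      have hinj : Set.InjOn c (↑X : Set V) := by
        intro u hu v hv hcuv
        by_contra hne'
        exact hproper u v (hne u (Finset.mem_coe.mp hu) v (Finset.mem_coe.mp hv) hne') hcuv
      have h1 : A.card = X.card := Finset.card_image_of_injOn hinj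
      omega
  have hAk : A.card ≤ k := by
    have := Finset.card_le_univ A
    simpa using this
  -- extend X by one vertex of each missing color
  let f : Fin k → V := fun r => Classical.choose (hsurj r)
  have hf : ∀ r, c (f r) = r := fun r => Classical.choose_spec (hsurj r)
  refine ⟨X ∪ Aᶜ.image f, ?_, ?_, ?_, ?_⟩
  · intro v
    rcases hXdom v with h | ⟨d, hd, hadj⟩
    · exact Or.inl (Finset.mem_coe.mpr (Finset.mem_union_left _ h))
    · exact Or.inr ⟨d, Finset.mem_coe.mpr (Finset.mem_union_left _ hd), hadj⟩
  · apply myConn_induce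
    apply myConn_extend hXconn
    · intro v hv
      exact Finset.mem_coe.mpr (Finset.mem_union_left _ (Finset.mem_coe.mp hv))
    · intro v _
      rcases hXdom v with h | ⟨d, hd, hadj⟩
      · exact Or.inl (Finset.mem_coe.mpr h)
      · exact Or.inr ⟨d, Finset.mem_coe.mpr hd, hadj⟩
  · have hc1 : (X ∪ Aᶜ.image f).card ≤ X.card + (Aᶜ.image f).card :=
      Finset.card_union_le _ _
    have hc2 : (Aᶜ.image f).card ≤ Aᶜ.card := Finset.card_image_le
    have hc3 : (Aᶜ : Finset (Fin k)).card = k - A.card := by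
      rw [Finset.card_compl]
      simp
    omega
  · intro r
    by_cases hr : r ∈ A
    · obtain ⟨x, hx, hcx⟩ := Finset.mem_image.mp hr
      exact ⟨x, Finset.mem_union_left _ hx, hcx⟩
    · exact ⟨f r, Finset.mem_union_right _
        (Finset.mem_image_of_mem f (Finset.mem_compl.mpr hr)), hf r⟩
end

section
/- Let G be a finite P5-free simple graph, let d be a vertex of G, let I be an independent set with I ⊆ N(d), and let P be a set of vertices of G such that P ∩ N[d] = ∅ and every vertex of P has a neighbor in I. Then there exists I' ⊆ I with |I'| ≤ 2 such that every vertex of P has a neighbor in I'. -/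
lemma p5_from {V : Type*} (G : SimpleGraph V) (v0 v1 v2 v3 v4 : V)
    (h01 : G.Adj v0 v1) (h12 : G.Adj v1 v2) (h23 : G.Adj v2 v3) (h34 : G.Adj v3 v4)
    (h02 : ¬ G.Adj v0 v2) (h03 : ¬ G.Adj v0 v3) (h04 : ¬ G.Adj v0 v4)
    (h13 : ¬ G.Adj v1 v3) (h14 : ¬ G.Adj v1 v4) (h24 : ¬ G.Adj v2 v4)
    (n02 : v0 ≠ v2) (n03 : v0 ≠ v3) (n04 : v0 ≠ v4)
    (n13 : v1 ≠ v3) (n14 : v1 ≠ v4) (n24 : v2 ≠ v4) :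
    ¬ IsP5Free G := by
  intro h
  apply h
  refine ⟨![v0, v1, v2, v3, v4], ?_, ?_⟩
  · intro i j hij
    fin_cases i <;> fin_cases j <;>
      simp_all [h01.ne, h12.ne, h23.ne, h34.ne, h01.ne', h12.ne', h23.ne', h34.ne',
        n02.symm, n03.symm, n04.symm, n13.symm, n14.symm, n24.symm]
  · have h20 : ¬ G.Adj v2 v0 := fun h => h02 h.symm
    have h30 : ¬ G.Adj v3 v0 := fun h => h03 h.symm
    have h40 : ¬ G.Adj v4 v0 := fun h => h04 h.symm
    have h31 : ¬ G.Adj v3 v1 := fun h => h13 h.symm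
    have h41 : ¬ G.Adj v4 v1 := fun h => h14 h.symm
    have h42 : ¬ G.Adj v4 v2 := fun h => h24 h.symm
    intro i j
    fin_cases i <;> fin_cases j <;>
      simp_all [h01.symm, h12.symm, h23.symm, h34.symm, G.irrefl]

theorem stmt3 {V : Type*} [Fintype V] (G : SimpleGraph V) (hP5 : IsP5Free G)
    (d : V) (I P : Set V)
    (hIindep : ∀ u ∈ I, ∀ v ∈ I, u ≠ v → ¬ G.Adj u v)
    (hIN : I ⊆ G.neighborSet d)
    (hPnotN : ∀ p ∈ P, p ≠ d ∧ ¬ G.Adj p d)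
    (hPI : ∀ p ∈ P, ∃ v ∈ I, G.Adj p v) :
    ∃ I' : Finset V, (↑I' : Set V) ⊆ I ∧ I'.card ≤ 2 ∧
      ∀ p ∈ P, ∃ v ∈ I', G.Adj p v := by
  classical
  by_cases hPe : P = ∅
  · exact ⟨∅, by simp, by simp, by simp [hPe]⟩
  obtain ⟨r0, hr0⟩ := Set.nonempty_iff_ne_empty.mpr hPe
  obtain ⟨v0, hv0I, _⟩ := hPI r0 hr0
  set A : V → Finset V := fun v => Finset.univ.filter (fun x => x ∈ P ∧ G.Adj x v) with hAdef
  have hA : ∀ v x, x ∈ A v ↔ x ∈ P ∧ G.Adj x v := by intro v x; simp [hAdef]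
  set It : Finset V := Finset.univ.filter (· ∈ I) with hItdef
  have hIt : ∀ x, x ∈ It ↔ x ∈ I := by intro x; simp [hItdef]
  have hsne : (It ×ˢ It).Nonempty := ⟨(v0, v0), by simp [Finset.mem_product, hIt v0, hv0I]⟩
  obtain ⟨⟨a, b⟩, habmem, hmax⟩ :=
    Finset.exists_max_image (It ×ˢ It) (fun ab => (A ab.1 ∪ A ab.2).card) hsne
  rw [Finset.mem_product] at habmem
  have haI : a ∈ I := (hIt a).mp habmem.1
  have hbI : b ∈ I := (hIt b).mp habmem.2
  by_cases hcov : ∀ x ∈ P, G.Adj x a ∨ G.Adj x b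
  · refine ⟨{a, b}, ?_, ?_, ?_⟩
    · intro x hx
      simp only [Finset.coe_insert, Finset.coe_singleton, Set.mem_insert_iff,
        Set.mem_singleton_iff] at hx
      rcases hx with rfl | rfl <;> assumption
    · exact (Finset.card_insert_le a {b}).trans (by simp)
    · intro x hx
      rcases hcov x hx with h | h
      · exact ⟨a, by simp, h⟩
      · exact ⟨b, by simp, h⟩
  · exfalso
    push_neg at hcov
    obtain ⟨r, hrP, hra, hrb⟩ := hcov
    obtain ⟨c, hcI, hrc⟩ := hPI r hrP
    have hrA : ∀ v, r ∈ A v ↔ G.Adj r v := fun v => by simp [hA v r, hrP]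
    -- extraction of q ∈ A b \ (A a ∪ A c)
    have hmaxac := hmax (a, c) (Finset.mem_product.mpr ⟨(hIt a).mpr haI, (hIt c).mpr hcI⟩)
    have hmaxcb := hmax (c, b) (Finset.mem_product.mpr ⟨(hIt c).mpr hcI, (hIt b).mpr hbI⟩)
    simp only at hmaxac hmaxcb
    have hq : ∃ q, q ∈ P ∧ G.Adj q b ∧ ¬ G.Adj q a ∧ ¬ G.Adj q c := by
      by_contra h
      push_neg at h
      have hss : A a ∪ A b ⊂ A a ∪ A c := by
        constructor
        · intro x hx
          rcases Finset.mem_union.mp hx with hx | hx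
          · exact Finset.mem_union_left _ hx
          · obtain ⟨hxP, hxb⟩ := (hA b x).mp hx
            by_cases hxa : G.Adj x a
            · exact Finset.mem_union_left _ ((hA a x).mpr ⟨hxP, hxa⟩)
            · exact Finset.mem_union_right _ ((hA c x).mpr ⟨hxP, h x hxP hxb hxa⟩)
        · intro hcon
          have : r ∈ A a ∪ A b := hcon (Finset.mem_union_right _ ((hrA c).mpr hrc))
          rcases Finset.mem_union.mp this with hx | hx
          · exact hra ((hrA a).mp hx)
          · exact hrb ((hrA b).mp hx)
      have := Finset.card_lt_card hss
      omega
    have hp : ∃ p, p ∈ P ∧ G.Adj p a ∧ ¬ G.Adj p b ∧ ¬ G.Adj p c := by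
      by_contra h
      push_neg at h
      have hss : A a ∪ A b ⊂ A c ∪ A b := by
        constructor
        · intro x hx
          rcases Finset.mem_union.mp hx with hx | hx
          · obtain ⟨hxP, hxa⟩ := (hA a x).mp hx
            by_cases hxb : G.Adj x b
            · exact Finset.mem_union_right _ ((hA b x).mpr ⟨hxP, hxb⟩)
            · exact Finset.mem_union_left _ ((hA c x).mpr ⟨hxP, h x hxP hxa hxb⟩)
          · exact Finset.mem_union_right _ hx
        · intro hcon
          have : r ∈ A a ∪ A b := hcon (Finset.mem_union_left _ ((hrA c).mpr hrc))
          rcases Finset.mem_union.mp this with hx | hx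
          · exact hra ((hrA a).mp hx)
          · exact hrb ((hrA b).mp hx)
      have := Finset.card_lt_card hss
      omega
    obtain ⟨p, hpP, hpa, hpb, hpc⟩ := hp
    obtain ⟨q, hqP, hqb, hqa, hqc⟩ := hq
    -- basic facts
    have hda : G.Adj d a := hIN haI
    have hdb : G.Adj d b := hIN hbI
    have hdc : G.Adj d c := hIN hcI
    have hPd : ∀ x ∈ P, ¬ G.Adj x d := fun x hx => (hPnotN x hx).2
    have hPneI : ∀ x ∈ P, ∀ v, G.Adj d v → x ≠ v := by
      intro x hx v hv he
      exact (hPnotN x hx).2 (he ▸ hv.symm)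
    have hab : a ≠ b := fun h => hpb (h ▸ hpa)
    have hca : c ≠ a := fun h => hra (h ▸ hrc)
    have hcb : c ≠ b := fun h => hrb (h ▸ hrc)
    have hnab : ¬ G.Adj a b := hIindep a haI b hbI hab
    have hnca : ¬ G.Adj c a := hIindep c hcI a haI hca
    have hpq : p ≠ q := fun h => hqa (h ▸ hpa)
    -- p and q must be adjacent, else p-a-d-b-q is an induced P5
    have hadjpq : G.Adj p q := by
      by_contra hnpq
      exact p5_from G p a d b q hpa hda.symm hdb hqb.symm
        (hPd p hpP) hpb hnpq hnab (fun h => hqa h.symm) (fun h => hPd q hqP h.symm)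
        (hPnotN p hpP).1
        (hPneI p hpP b hdb) hpq hab ((hPneI q hqP a hda).symm)
        (((hPnotN q hqP).1).symm)
        hP5
    -- then c-d-a-p-q is an induced P5
    exact p5_from G c d a p q hdc.symm hda hpa.symm hadjpq
      hnca (fun h => hpc h.symm) (fun h => hqc h.symm)
      (fun h => hPd p hpP h.symm) (fun h => hPd q hqP h.symm)
      (fun h => hqa h.symm)
      hca ((hPneI p hpP c hdc).symm) ((hPneI q hqP c hdc).symm)
      (((hPnotN p hpP).1).symm) (((hPnotN q hqP).1).symm)
      ((hPneI q hqP a hda).symm)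
      hP5
end

section
/- Let k ≥ 1, let G be a finite P5-free simple graph, let C ⊆ V(G), and let hom : C → {1,…,k} be a function such that each color class hom^{-1}(r) is an independent set of G. Let D ⊆ C be such that: (i) every vertex of C is in D or has a neighbor in D; (ii) the subgraph of G induced on D is connected; and (iii) D ∩ hom^{-1}(r) ≠ ∅ for every r ∈ {1,…,k}. Let X be the set of vertices v ∉ C that have a neighbor in C but no neighbor in D, and let Y be the set of vertices v ∉ C that have no neighbor in C. Then no edge of G has one endpoint in X and the other endpoint in Y. -/
lemma walk_switch {V : Type*} (G : SimpleGraph V) (D : Set V) (c : V)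
    (u v : ↥D) (w : (G.induce D).Walk u v) (hu : G.Adj c ↑u) (hv : ¬ G.Adj c ↑v) :
    ∃ a b : V, a ∈ D ∧ b ∈ D ∧ G.Adj c a ∧ G.Adj a b ∧ ¬ G.Adj c b := by
  induction w with
  | nil => exact absurd hu hv
  | @cons u u' v h w ih =>
    by_cases h' : G.Adj c ↑u'
    · exact ih h' hv
    · exact ⟨u, u', u.2, u'.2, hu, h, h'⟩

theorem stmt4 {V : Type*} [Fintype V] (k : ℕ) (hk : 1 ≤ k)
    (G : SimpleGraph V) (hP5 : IsP5Free G)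
    (C : Set V) (hom : V → Fin k)
    (hindep : ∀ u ∈ C, ∀ v ∈ C, hom u = hom v → u ≠ v → ¬ G.Adj u v)
    (D : Set V) (hDC : D ⊆ C)
    (hdom : ∀ v ∈ C, v ∈ D ∨ ∃ d ∈ D, G.Adj v d)
    (hDconn : (G.induce D).Connected)
    (hhit : ∀ r : Fin k, ∃ d ∈ D, hom d = r)
    (X Y : Set V)
    (hX : X = {v : V | v ∉ C ∧ (∃ c ∈ C, G.Adj v c) ∧ ¬ ∃ d ∈ D, G.Adj v d})
    (hY : Y = {v : V | v ∉ C ∧ ¬ ∃ c ∈ C, G.Adj v c}) :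
    ∀ x ∈ X, ∀ y ∈ Y, ¬ G.Adj x y := by
  subst hX hY
  rintro x ⟨hxC, ⟨c, hcC, hxc⟩, hxD⟩ y ⟨hyC, hyN⟩ hxy
  -- c is not in D
  have hcD : c ∉ D := fun h => hxD ⟨c, h, hxc⟩
  -- c has a neighbor d1 in D
  obtain ⟨d1, hd1D, hcd1⟩ := (hdom c hcC).resolve_left hcD
  -- a vertex of D with the same color as c
  obtain ⟨ds, hdsD, hds⟩ := hhit (hom c)
  have hcds : ¬ G.Adj c ds :=
    hindep c hcC ds (hDC hdsD) hds.symm (fun h => hcD (h ▸ hdsD))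
  -- walk from d1 to ds in D
  obtain ⟨w⟩ := hDconn ⟨d1, hd1D⟩ ⟨ds, hdsD⟩
  obtain ⟨a, b, haD, hbD, hca, hab, hcb⟩ := walk_switch G D c _ _ w hcd1 hcds
  -- non-adjacencies
  have hyc : ¬ G.Adj y c := fun h => hyN ⟨c, hcC, h⟩
  have hya : ¬ G.Adj y a := fun h => hyN ⟨a, hDC haD, h⟩
  have hyb : ¬ G.Adj y b := fun h => hyN ⟨b, hDC hbD, h⟩
  have hxa : ¬ G.Adj x a := fun h => hxD ⟨a, haD, h⟩
  have hxb : ¬ G.Adj x b := fun h => hxD ⟨b, hbD, h⟩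
  -- distinctness
  have hyx : y ≠ x := fun h => G.irrefl (h ▸ hxy)
  have hyc' : y ≠ c := fun h => hyC (h ▸ hcC)
  have hya' : y ≠ a := fun h => hyC (h ▸ hDC haD)
  have hyb' : y ≠ b := fun h => hyC (h ▸ hDC hbD)
  have hxc' : x ≠ c := fun h => hxC (h ▸ hcC)
  have hxa' : x ≠ a := fun h => hxC (h ▸ hDC haD)
  have hxb' : x ≠ b := fun h => hxC (h ▸ hDC hbD)
  have hca' : c ≠ a := G.ne_of_adj hca
  have hcb' : c ≠ b := fun h => hcD (h ▸ hbD)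
  have hab' : a ≠ b := G.ne_of_adj hab
  have hxy' : G.Adj y x := hxy.symm
  have hyc2 : ¬ G.Adj c y := fun h => hyc h.symm
  have hya2 : ¬ G.Adj a y := fun h => hya h.symm
  have hyb2 : ¬ G.Adj b y := fun h => hyb h.symm
  have hxa2 : ¬ G.Adj a x := fun h => hxa h.symm
  have hxb2 : ¬ G.Adj b x := fun h => hxb h.symm
  have hcb2 : ¬ G.Adj b c := fun h => hcb h.symm
  have hxc2 : G.Adj c x := hxc.symm
  have hca2 : G.Adj a c := hca.symm
  have hab2 : G.Adj b a := hab.symm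
  have hyx2 : x ≠ y := hyx.symm
  have hyc2' : c ≠ y := hyc'.symm
  have hya2' : a ≠ y := hya'.symm
  have hyb2' : b ≠ y := hyb'.symm
  have hxc2' : c ≠ x := hxc'.symm
  have hxa2' : a ≠ x := hxa'.symm
  have hxb2' : b ≠ x := hxb'.symm
  have hca2' : a ≠ c := hca'.symm
  have hcb2' : b ≠ c := hcb'.symm
  have hab2' : b ≠ a := hab'.symm
  have iy : ¬ G.Adj y y := G.irrefl
  have ix : ¬ G.Adj x x := G.irrefl
  have ic : ¬ G.Adj c c := G.irrefl
  have ia : ¬ G.Adj a a := G.irrefl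
  have ib : ¬ G.Adj b b := G.irrefl
  apply hP5
  refine ⟨![y, x, c, a, b], ?_, ?_⟩
  · intro i j hij
    fin_cases i <;> fin_cases j <;> first
      | rfl
      | (exfalso; simp only [Matrix.cons_val_zero, Matrix.cons_val_one, Matrix.head_cons,
          Matrix.cons_val_two, Matrix.tail_cons, Matrix.cons_val_three,
          Matrix.cons_val_four] at hij; tauto)
  · intro i j
    fin_cases i <;> fin_cases j <;>
      (simp only [Matrix.cons_val_zero, Matrix.cons_val_one, Matrix.head_cons,
        Matrix.cons_val_two, Matrix.tail_cons, Matrix.cons_val_three,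
        Matrix.cons_val_four]; norm_num; try tauto)
end

section
/- Let k ≥ 1, let G be a finite P5-free simple graph, let C ⊆ V(G), and let hom : C → {1,…,k} be a function such that each color class hom^{-1}(r) is an independent set of G. Let D ⊆ C be such that: (i) every vertex of C is in D or has a neighbor in D; (ii) the subgraph of G induced on D is connected; (iii) D ∩ hom^{-1}(r) ≠ ∅ for every r ∈ {1,…,k}; and (iv) no vertex u of G has, for every r ∈ {1,…,k}, a neighbor in D ∩ hom^{-1}(r). Let Y be the set of vertices v ∉ C that have no neighbor in C. Then every connected component of the subgraph of G induced on Y is a module in G. -/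
/-- `X` is a module in `G`: all vertices of `X` have the same neighbors outside `X`. -/
def IsModule {V : Type*} (G : SimpleGraph V) (X : Set V) : Prop :=
  ∀ u ∈ X, ∀ v ∈ X, ∀ w ∉ X, (G.Adj u w ↔ G.Adj v w)

/-- An explicit induced 5-vertex path contradicts `IsP5Free`. -/
lemma p5_of {V : Type*} {G : SimpleGraph V} (hP5 : IsP5Free G) (a b c d e : V)
    (hab : G.Adj a b) (hbc : G.Adj b c) (hcd : G.Adj c d) (hde : G.Adj d e)
    (hac : ¬ G.Adj a c) (had : ¬ G.Adj a d) (hae : ¬ G.Adj a e)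
    (hbd : ¬ G.Adj b d) (hbe : ¬ G.Adj b e) (hce : ¬ G.Adj c e)
    (nac : a ≠ c) (nad : a ≠ d) (nae : a ≠ e)
    (nbd : b ≠ d) (nbe : b ≠ e) (nce : c ≠ e) : False := by
  apply hP5
  refine ⟨![a, b, c, d, e], ?_, ?_⟩
  · have nab := hab.ne
    have nbc := hbc.ne
    have ncd := hcd.ne
    have nde := hde.ne
    intro i j h
    fin_cases i <;> fin_cases j <;> simp_all
  · intro i j
    have h1 := hab.symm
    have h2 := hbc.symm
    have h3 := hcd.symm
    have h4 := hde.symm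
    have l0 := G.loopless.irrefl a
    have l1 := G.loopless.irrefl b
    have l2 := G.loopless.irrefl c
    have l3 := G.loopless.irrefl d
    have l4 := G.loopless.irrefl e
    have g1 : ¬ G.Adj c a := fun h => hac h.symm
    have g2 : ¬ G.Adj d a := fun h => had h.symm
    have g3 : ¬ G.Adj e a := fun h => hae h.symm
    have g4 : ¬ G.Adj d b := fun h => hbd h.symm
    have g5 : ¬ G.Adj e b := fun h => hbe h.symm
    have g6 : ¬ G.Adj e c := fun h => hce h.symm
    fin_cases i <;> fin_cases j <;> simp_all

theorem stmt5 {V : Type*} [Fintype V] (k : ℕ) (hk : 1 ≤ k)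
    (G : SimpleGraph V) (hP5 : IsP5Free G)
    (C : Set V) (hom : V → Fin k)
    (hindep : ∀ u ∈ C, ∀ v ∈ C, hom u = hom v → u ≠ v → ¬ G.Adj u v)
    (D : Set V) (hDC : D ⊆ C)
    (hdom : ∀ v ∈ C, v ∈ D ∨ ∃ d ∈ D, G.Adj v d)
    (hDconn : (G.induce D).Connected)
    (hhit : ∀ r : Fin k, ∃ d ∈ D, hom d = r)
    (hnofull : ∀ u : V, ¬ ∀ r : Fin k, ∃ d ∈ D, hom d = r ∧ G.Adj u d)
    (Y : Set V)
    (hY : Y = {v : V | v ∉ C ∧ ¬ ∃ c ∈ C, G.Adj v c}) :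
    ∀ K : (G.induce Y).ConnectedComponent,
      IsModule G (Subtype.val '' K.supp) := by
  have hYmem : ∀ v : V, v ∈ Y ↔ v ∉ C ∧ ¬ ∃ c ∈ C, G.Adj v c := by
    intro v; rw [hY]; rfl
  -- vertices of Y have no neighbors in C
  have noY : ∀ z ∈ Y, ∀ p ∈ C, ¬ G.Adj z p := by
    intro z hz p hp h
    exact ((hYmem z).1 hz).2 ⟨p, hp, h⟩
  -- core step: adjacency to w propagates along edges of G[Y], for w ∉ Y
  have core : ∀ x y w : V, x ∈ Y → y ∈ Y → G.Adj x y → G.Adj x w → w ∉ Y → G.Adj y w := by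
    intro x y w hx hy hxy hxw hwY
    by_contra hyw
    have hxC : x ∉ C := ((hYmem x).1 hx).1
    have hyC : y ∉ C := ((hYmem y).1 hy).1
    have hwC : w ∉ C := fun h => noY x hx w h hxw
    have hwc : ∃ c ∈ C, G.Adj w c := by
      by_contra h
      exact hwY ((hYmem w).2 ⟨hwC, h⟩)
    obtain ⟨c, hcC, hwc⟩ := hwc
    have nyw : y ≠ w := fun h => hwY (h ▸ hy)
    -- step 1: w has a neighbor in D
    have hd0 : ∃ d0 ∈ D, G.Adj w d0 := by
      rcases hdom c hcC with hcD | ⟨d, hdD, hcd⟩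
      · exact ⟨c, hcD, hwc⟩
      · by_cases hwd : G.Adj w d
        · exact ⟨d, hdD, hwd⟩
        · have hdC : d ∈ C := hDC hdD
          exact absurd (p5_of hP5 y x w c d hxy.symm hxw hwc hcd hyw
            (noY y hy c hcC) (noY y hy d hdC) (noY x hx c hcC) (noY x hx d hdC) hwd
            nyw (fun h => hyC (h ▸ hcC)) (fun h => hyC (h ▸ hdC))
            (fun h => hxC (h ▸ hcC)) (fun h => hxC (h ▸ hdC))
            (fun h => hwC (h ▸ hdC))) (fun h => h)
    obtain ⟨d0, hd0D, hwd0⟩ := hd0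
    by_cases hstep : ∃ x1 ∈ D, ∃ x2 ∈ D, G.Adj w x1 ∧ G.Adj x1 x2 ∧ ¬ G.Adj w x2
    · obtain ⟨x1, hx1D, x2, hx2D, hwx1, hx12, hwx2⟩ := hstep
      have hx1C : x1 ∈ C := hDC hx1D
      have hx2C : x2 ∈ C := hDC hx2D
      exact p5_of hP5 y x w x1 x2 hxy.symm hxw hwx1 hx12 hyw
        (noY y hy x1 hx1C) (noY y hy x2 hx2C) (noY x hx x1 hx1C) (noY x hx x2 hx2C) hwx2
        nyw (fun h => hyC (h ▸ hx1C)) (fun h => hyC (h ▸ hx2C))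
        (fun h => hxC (h ▸ hx1C)) (fun h => hxC (h ▸ hx2C))
        (fun h => hwC (h ▸ hx2C))
    · push_neg at hstep
      -- w is adjacent to all of D
      have walkD : ∀ (a b : ↥D) (p : (G.induce D).Walk a b),
          G.Adj w a.1 → G.Adj w b.1 := by
        intro a b p
        induction p with
        | nil => exact fun h => h
        | cons h q ih =>
          intro hwa
          exact ih (hstep _ (Subtype.coe_prop _) _ (Subtype.coe_prop _) hwa h)
      have hall : ∀ d ∈ D, G.Adj w d := by
        intro d hdD
        obtain ⟨p⟩ := hDconn.preconnected ⟨d0, hd0D⟩ ⟨d, hdD⟩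
        exact walkD _ _ p hwd0
      apply hnofull w
      intro r
      obtain ⟨d, hdD, hr⟩ := hhit r
      exact ⟨d, hdD, hr, hall d hdD⟩
  intro K u hu v hv w hw
  obtain ⟨u', hu', rfl⟩ := hu
  obtain ⟨v', hv', rfl⟩ := hv
  have claim : ∀ a b : ↥Y, a ∈ K.supp → b ∈ K.supp → G.Adj a.1 w → G.Adj b.1 w := by
    intro a b ha hb haw
    have hwY : w ∉ Y := by
      intro hwy
      apply hw
      refine ⟨⟨w, hwy⟩, ?_, rfl⟩
      rw [SimpleGraph.ConnectedComponent.mem_supp_iff] at ha ⊢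
      have hadj : (G.induce Y).Adj a ⟨w, hwy⟩ := haw
      exact (SimpleGraph.ConnectedComponent.sound hadj.symm.reachable).trans ha
    have hr : (G.induce Y).Reachable a b := by
      rw [SimpleGraph.ConnectedComponent.mem_supp_iff] at ha hb
      exact SimpleGraph.ConnectedComponent.exact (ha.trans hb.symm)
    obtain ⟨p⟩ := hr
    clear ha hb
    induction p with
    | nil => exact haw
    | cons h q ih =>
      exact ih (core _ _ w (Subtype.coe_prop _) (Subtype.coe_prop _) h haw hwY)
  exact ⟨fun h => claim u' v' hu' hv' h, fun h => claim v' u' hv' hu' h⟩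
end

section
/- Let k ≥ 1, let G be a finite P5-free simple graph, let C ⊆ V(G), and let hom : C → {1,…,k} be a function such that each color class hom^{-1}(r) is an independent set of G. Let D ⊆ C be such that: (i) every vertex of C is in D or has a neighbor in D; (ii) the subgraph of G induced on D is connected; (iii) D ∩ hom^{-1}(r) ≠ ∅ for every r ∈ {1,…,k}; and (iv) no vertex u of G has, for every r ∈ {1,…,k}, a neighbor in D ∩ hom^{-1}(r). Then every connected component Z of the subgraph of G induced on V(G) \ N[D] satisfies: either the vertex set of Z is a module in G, or every vertex of Z has a neighbor in C. -/
/-- The closed neighborhood of a set `S`: `S` together with all vertices having a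
neighbor in `S`. -/
def closedNbhd {V : Type*} (G : SimpleGraph V) (S : Set V) : Set V :=
  S ∪ {v : V | ∃ s ∈ S, G.Adj v s}

/-- Along a walk from a vertex satisfying `Q` to one not satisfying `Q`, there is an
edge switching from `Q` to `¬ Q`, with its first endpoint reachable from the start. -/
lemma walk_switch_s6 {V : Type*} {H : SimpleGraph V} (Q : V → Prop) :
    ∀ {u v : V}, H.Walk u v → Q u → ¬ Q v →
      ∃ a b, H.Adj a b ∧ Q a ∧ ¬ Q b ∧ H.Reachable u a := by
  intro u v p
  induction p with
  | nil => intro h h'; exact absurd h h'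
  | @cons u x v h p ih =>
    intro hu hv
    by_cases hx : Q x
    · obtain ⟨a, b, hab, ha, hb, hr⟩ := ih hx hv
      exact ⟨a, b, hab, ha, hb, h.reachable.trans hr⟩
    · exact ⟨u, x, h, hu, hx, .refl u⟩

/-- From a suitable configuration of edges and non-edges, build an induced `P5`. -/
lemma build_P5 {V : Type*} (G : SimpleGraph V) (x0 x1 x2 x3 x4 : V)
    (e1 : G.Adj x0 x1) (e2 : G.Adj x1 x2) (e3 : G.Adj x2 x3) (e4 : G.Adj x3 x4)
    (n1 : ¬ G.Adj x0 x2) (n2 : ¬ G.Adj x0 x3) (n3 : ¬ G.Adj x0 x4)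
    (n4 : ¬ G.Adj x1 x3) (n5 : ¬ G.Adj x1 x4) (n6 : ¬ G.Adj x2 x4)
    (m1 : x0 ≠ x2) (m2 : x0 ≠ x3) (m3 : x0 ≠ x4)
    (m4 : x1 ≠ x3) (m5 : x1 ≠ x4) (m6 : x2 ≠ x4) :
    ∃ p : Fin 5 → V, Function.Injective p ∧
      ∀ i j : Fin 5, G.Adj (p i) (p j) ↔ (j.val = i.val + 1 ∨ i.val = j.val + 1) := by
  have d1 := e1.ne
  have d2 := e2.ne
  have d3 := e3.ne
  have d4 := e4.ne
  refine ⟨![x0, x1, x2, x3, x4], ?_, ?_⟩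
  · intro i j hij
    fin_cases i <;> fin_cases j <;> simp_all
  · have e1' := e1.symm; have e2' := e2.symm; have e3' := e3.symm; have e4' := e4.symm
    have n1' : ¬ G.Adj x2 x0 := fun h => n1 h.symm
    have n2' : ¬ G.Adj x3 x0 := fun h => n2 h.symm
    have n3' : ¬ G.Adj x4 x0 := fun h => n3 h.symm
    have n4' : ¬ G.Adj x3 x1 := fun h => n4 h.symm
    have n5' : ¬ G.Adj x4 x1 := fun h => n5 h.symm
    have n6' : ¬ G.Adj x4 x2 := fun h => n6 h.symm
    intro i j
    fin_cases i <;> fin_cases j <;> simp_all [SimpleGraph.irrefl]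

theorem stmt6 {V : Type*} [Fintype V] (k : ℕ) (hk : 1 ≤ k)
    (G : SimpleGraph V) (hP5 : IsP5Free G)
    (C : Set V) (hom : V → Fin k)
    (hindep : ∀ u ∈ C, ∀ v ∈ C, hom u = hom v → u ≠ v → ¬ G.Adj u v)
    (D : Set V) (hDC : D ⊆ C)
    (hdom : ∀ v ∈ C, v ∈ D ∨ ∃ d ∈ D, G.Adj v d)
    (hDconn : (G.induce D).Connected)
    (hhit : ∀ r : Fin k, ∃ d ∈ D, hom d = r)
    (hnofull : ∀ u : V, ¬ ∀ r : Fin k, ∃ d ∈ D, hom d = r ∧ G.Adj u d) :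
    ∀ K : (G.induce (Set.univ \ closedNbhd G D)).ConnectedComponent,
      IsModule G (Subtype.val '' K.supp) ∨
      ∀ z ∈ Subtype.val '' K.supp, ∃ c ∈ C, G.Adj z c := by
  intro K
  left
  have hSnadj : ∀ x : V, x ∈ Set.univ \ closedNbhd G D → ∀ d ∈ D, ¬ G.Adj x d := by
    intro x hx d hd hadj
    exact hx.2 (Or.inr ⟨d, hd, hadj⟩)
  have hSnD : ∀ x : V, x ∈ Set.univ \ closedNbhd G D → x ∉ D :=
    fun x hx hxD => hx.2 (Or.inl hxD)
  -- key asymmetric claim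
  have key : ∀ u ∈ Subtype.val '' K.supp, ∀ v ∈ Subtype.val '' K.supp,
      ∀ w ∉ Subtype.val '' K.supp, G.Adj u w → ¬ G.Adj v w → False := by
    intro u hu v hv w hw huw hvw
    obtain ⟨u', hu', rfl⟩ := hu
    obtain ⟨v', hv', rfl⟩ := hv
    rw [SimpleGraph.ConnectedComponent.mem_supp_iff] at hu' hv'
    have hreach : (G.induce (Set.univ \ closedNbhd G D)).Reachable u' v' :=
      SimpleGraph.ConnectedComponent.exact (hu'.trans hv'.symm)
    obtain ⟨p⟩ := hreach
    obtain ⟨a, b, hab, haw, hbw, hra⟩ := walk_switch_s6 (fun x => G.Adj x.val w) p huw hvw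
    have hab' : G.Adj a.val b.val := hab
    have haK : (G.induce (Set.univ \ closedNbhd G D)).connectedComponentMk a = K :=
      (SimpleGraph.ConnectedComponent.sound hra).symm.trans hu'
    -- w is not in the complement of the closed neighborhood
    have hwS : w ∉ Set.univ \ closedNbhd G D := by
      intro hwS
      apply hw
      refine ⟨⟨w, hwS⟩, (SimpleGraph.ConnectedComponent.mem_supp_iff _ _).mpr ?_, rfl⟩
      have hadjwa : (G.induce (Set.univ \ closedNbhd G D)).Adj ⟨w, hwS⟩ a := haw.symm
      exact (SimpleGraph.ConnectedComponent.sound hadjwa.reachable).trans haK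
    have hwCN : w ∈ closedNbhd G D := by
      by_contra h
      exact hwS ⟨trivial, h⟩
    have hwD : w ∉ D := fun hwD => hSnadj a.val a.2 w hwD haw
    have hwadjD : ∃ d ∈ D, G.Adj w d := by
      rcases hwCN with h | h
      · exact absurd h hwD
      · exact h
    have hwnadjD : ∃ d ∈ D, ¬ G.Adj w d := by
      by_contra h
      push_neg at h
      apply hnofull w
      intro r
      obtain ⟨d, hdD, hdr⟩ := hhit r
      exact ⟨d, hdD, hdr, h d hdD⟩
    obtain ⟨d, hd, hwd⟩ := hwadjD
    obtain ⟨d', hd', hwd'⟩ := hwnadjD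
    obtain ⟨q⟩ := hDconn.preconnected ⟨d, hd⟩ ⟨d', hd'⟩
    obtain ⟨d1, d2, hd12, hwd1, hwd2, -⟩ :=
      walk_switch_s6 (fun x : D => G.Adj w x.val) q hwd hwd'
    have hd12' : G.Adj d1.val d2.val := hd12
    apply hP5
    exact build_P5 G b.val a.val w d1.val d2.val
      hab'.symm haw hwd1 hd12'
      hbw (hSnadj b.val b.2 d1.val d1.2) (hSnadj b.val b.2 d2.val d2.2)
      (hSnadj a.val a.2 d1.val d1.2) (hSnadj a.val a.2 d2.val d2.2) hwd2
      (fun h => hwS (by rw [← h]; exact b.2))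
      (fun h => hSnD b.val b.2 (by rw [h]; exact d1.2)) (fun h => hSnD b.val b.2 (by rw [h]; exact d2.2))
      (fun h => hSnD a.val a.2 (by rw [h]; exact d1.2)) (fun h => hSnD a.val a.2 (by rw [h]; exact d2.2))
      (fun h => hwD (by rw [h]; exact d2.2))
  -- conclude the module property
  intro u hu v hv w hw
  constructor
  · intro huw
    by_contra hvw
    exact key u hu v hv w hw huw hvw
  · intro hvw
    by_contra huw
    exact key v hv u hu w hw hvw huw
end

section
/- Let k ≥ 1, let G be a finite P5-free simple graph, let C ⊆ V(G) be nonempty with the subgraph of G induced on C connected, and suppose the largest clique contained in C has at most k vertices. Let D ⊆ C be such that every vertex of C is in D or has a neighbor in D. Let R be the set of vertices v ∉ C that have a neighbor in C but no neighbor in D, and suppose that the vertex set of every connected component of the subgraph of G induced on R is a module in G. Then there exists a set D̃ with D ⊆ D̃ ⊆ R ∪ C such that every vertex of R ∪ C is in D̃ or has a neighbor in D̃, and |D̃ \ D| ≤ max{k+1, 3}. -/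
set_option linter.unusedTactic false
set_option linter.unreachableTactic false
set_option linter.unusedVariables false
set_option linter.unusedSectionVars false
set_option maxHeartbeats 1000000

namespace P5Work
variable {V : Type*}

/-- reachability within a vertex set `X` -/
def RIn (G : SimpleGraph V) (X : Set V) (a b : V) : Prop :=
  Relation.ReflTransGen (fun u v => G.Adj u v ∧ u ∈ X ∧ v ∈ X) a b

lemma RIn.symm {G : SimpleGraph V} {X : Set V} {a b : V} (h : RIn G X a b) : RIn G X b a := by
  refine (fun (hs : Std.Symm (fun u v : V => G.Adj u v ∧ u ∈ X ∧ v ∈ X)) => Std.Symm.symm (r := Relation.ReflTransGen _) _ _ h) ⟨?_⟩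
  rintro u v ⟨h1, h2, h3⟩; exact ⟨h1.symm, h3, h2⟩

lemma RIn.trans {G : SimpleGraph V} {X : Set V} {a b c : V} (h : RIn G X a b)
    (h2 : RIn G X b c) : RIn G X a c := Relation.ReflTransGen.trans h h2

lemma RIn.mono {G : SimpleGraph V} {X Y : Set V} (hXY : X ⊆ Y) {a b : V} (h : RIn G X a b) :
    RIn G Y a b := by
  refine (Relation.ReflTransGen.mono (r := fun u v => G.Adj u v ∧ u ∈ X ∧ v ∈ X) (p := fun u v => G.Adj u v ∧ u ∈ Y ∧ v ∈ Y) ?_) a b h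
  rintro u v ⟨h1, h2, h3⟩; exact ⟨h1, hXY h2, hXY h3⟩

lemma RIn.adj {G : SimpleGraph V} {X : Set V} {a b : V} (h : G.Adj a b) (ha : a ∈ X)
    (hb : b ∈ X) : RIn G X a b := Relation.ReflTransGen.single ⟨h, ha, hb⟩

/-- first step of a nontrivial chain -/
lemma RIn.first_step {G : SimpleGraph V} {X : Set V} {a b : V} (h : RIn G X a b) (hne : a ≠ b) :
    ∃ z ∈ X, G.Adj a z ∧ a ∈ X := by
  rcases Relation.ReflTransGen.cases_head h with rfl | ⟨c, ⟨h1, h2, h3⟩, _⟩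
  · exact absurd rfl hne
  · exact ⟨c, h3, h1, h2⟩

/-- crossing lemma for ReflTransGen -/
lemma cross {α : Type*} {r : α → α → Prop} {P : α → Prop} {a b : α}
    (h : Relation.ReflTransGen r a b) (ha : P a) (hb : ¬P b) :
    ∃ x y, r x y ∧ P x ∧ ¬P y := by
  induction h with
  | refl => exact absurd ha hb
  | tail h1 h2 ih =>
    rename_i c d
    by_cases hc : P c
    · exact ⟨c, d, h2, hc, hb⟩
    · exact ih hc

/-- chains to a base point stay within the reachability class -/
lemma RIn.restrict {G : SimpleGraph V} {X : Set V} {a1 : V} :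
    ∀ {x : V}, RIn G X x a1 → RIn G {z | z ∈ X ∧ RIn G X z a1} x a1 := by
  intro x h
  induction h using Relation.ReflTransGen.head_induction_on with
  | refl => exact Relation.ReflTransGen.refl
  | head h' hrest ih =>
    rename_i u c
    obtain ⟨hadj, hu, hc⟩ := h'
    exact Relation.ReflTransGen.head
      ⟨hadj, ⟨hu, Relation.ReflTransGen.head ⟨hadj, hu, hc⟩ hrest⟩, ⟨hc, hrest⟩⟩ ih

/-- instantiate P5-freeness on five explicit vertices -/
lemma no_p5 {G : SimpleGraph V} (hP5 : IsP5Free G) {a b c d e : V}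
    (hab : G.Adj a b) (hbc : G.Adj b c) (hcd : G.Adj c d) (hde : G.Adj d e)
    (hac : ¬ G.Adj a c) (had : ¬ G.Adj a d) (hae : ¬ G.Adj a e)
    (hbd : ¬ G.Adj b d) (hbe : ¬ G.Adj b e) (hce : ¬ G.Adj c e)
    (nac : a ≠ c) (nad : a ≠ d) (nae : a ≠ e) (nbd : b ≠ d) (nbe : b ≠ e) (nce : c ≠ e) :
    False := by
  apply hP5
  refine ⟨![a,b,c,d,e], ?_, ?_⟩
  · have nab := hab.ne; have nbc := hbc.ne; have ncd := hcd.ne; have nde := hde.ne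
    intro i j hij
    fin_cases i <;> fin_cases j <;> simp_all <;> first | rfl | (exfalso ; simp_all)
  · have hca : ¬ G.Adj c a := fun h => hac h.symm
    have hda : ¬ G.Adj d a := fun h => had h.symm
    have hea : ¬ G.Adj e a := fun h => hae h.symm
    have hdb : ¬ G.Adj d b := fun h => hbd h.symm
    have heb : ¬ G.Adj e b := fun h => hbe h.symm
    have hec : ¬ G.Adj e c := fun h => hce h.symm
    intro i j
    fin_cases i <;> fin_cases j <;>
      simp [hab, hbc, hcd, hde, hac, had, hae, hbd, hbe, hce,
        hca, hda, hea, hdb, heb, hec,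
        hab.symm, hbc.symm, hcd.symm, hde.symm, G.irrefl]


lemma RIn.rfl {G : SimpleGraph V} {X : Set V} {a : V} : RIn G X a a :=
  Relation.ReflTransGen.refl

lemma RIn.cross {G : SimpleGraph V} {X : Set V} {P : V → Prop} {a b : V}
    (h : RIn G X a b) (ha : P a) (hb : ¬ P b) :
    ∃ x y, (G.Adj x y ∧ x ∈ X ∧ y ∈ X) ∧ P x ∧ ¬ P y :=
  P5Work.cross h ha hb

/-- no induced P4 with vertices in X -/
def NoP4 (Δ : SimpleGraph V) (X : Set V) : Prop :=
  ∀ a ∈ X, ∀ b ∈ X, ∀ c ∈ X, ∀ d ∈ X,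
    Δ.Adj a b → Δ.Adj b c → Δ.Adj c d → ¬Δ.Adj a c → ¬Δ.Adj a d → ¬Δ.Adj b d →
    a ≠ c → a ≠ d → b ≠ d → False

def ConnPairs (Δ : SimpleGraph V) (X : Set V) : Prop :=
  ∀ a ∈ X, ∀ b ∈ X, RIn Δ X a b

lemma NoP4.compl {Δ : SimpleGraph V} {X : Set V} (h : NoP4 Δ X) : NoP4 Δᶜ X := by
  intro a ha b hb c hc d hd hab hbc hcd hac had hbd nac nad nbd
  -- Δᶜ-edges ab bc cd ; Δᶜ-nonedges (hence Δ-edges, given ≠) ac ad bd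
  have Hac : Δ.Adj a c := by
    by_contra h'; exact hac ⟨nac, h'⟩
  have Had : Δ.Adj a d := by
    by_contra h'; exact had ⟨nad, h'⟩
  have Hbd : Δ.Adj b d := by
    by_contra h'; exact hbd ⟨nbd, h'⟩
  -- Δ-nonedges from Δᶜ-edges:
  have Hab : ¬ Δ.Adj a b := hab.2
  have Hbc : ¬ Δ.Adj b c := hbc.2
  have Hcd : ¬ Δ.Adj c d := hcd.2
  -- P4 in Δ : b - d - a - c
  exact h b hb d hd a ha c hc Hbd Had.symm Hac
    (fun h' => Hab (h'.symm)) (fun h' => Hbc h') (fun h' => Hcd (h'.symm))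
    (Ne.symm hab.1) hbc.1 (Ne.symm hcd.1)

/-- If X is conn in Δ but X∖{v} is not "pairwise connected", then either a P4 exists or v is
Δ-adjacent to every other vertex of X. -/
lemma CaseL {Δ : SimpleGraph V} {X : Set V} {v : V} (hP4 : NoP4 Δ X)
    (hconn : ConnPairs Δ X) (hv : v ∈ X)
    (hdis : ∃ s ∈ X \ {v}, ∃ t ∈ X \ {v}, ¬ RIn Δ (X \ {v}) s t) :
    ∀ w ∈ X \ {v}, Δ.Adj v w := by
  set X' := X \ {v} with hX'
  by_contra hcon
  push_neg at hcon
  obtain ⟨u0, hu0, hvu0⟩ := hcon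
  obtain ⟨s, hs, t, ht, hst⟩ := hdis
  -- a vertex not RIn-X'-reachable from u0
  have : ∃ w0 ∈ X', ¬ RIn Δ X' w0 u0 := by
    by_cases h1 : RIn Δ X' s u0
    · by_cases h2 : RIn Δ X' t u0
      · exact absurd (RIn.trans h1 h2.symm) hst
      · exact ⟨t, ht, h2⟩
    · exact ⟨s, hs, h1⟩
  obtain ⟨w0, hw0, hw0u0⟩ := this
  -- neighbors of v in each class
  have claim : ∀ z ∈ X', ∃ y ∈ X', RIn Δ X' y z ∧ Δ.Adj v y := by
    intro z hz
    have hchain : RIn Δ X z v := hconn z hz.1 v hv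
    obtain ⟨α, β, ⟨hadj, hα, hβ⟩, hPα, hPβ⟩ :=
      cross (P := fun x => x ∈ X' ∧ RIn Δ X' x z) hchain
        ⟨hz, Relation.ReflTransGen.refl⟩
        (by rintro ⟨⟨_, hvv⟩, _⟩; exact hvv rfl)
    -- β ∉ class; β ∈ X. If β ≠ v then β ∈ X' and adj to α ∈ class, contradiction
    by_cases hβv : β = v
    · exact ⟨α, hPα.1, hPα.2, hβv ▸ hadj.symm⟩
    · exfalso
      have hβX' : β ∈ X' := ⟨hβ, hβv⟩
      exact hPβ ⟨hβX', RIn.trans (RIn.adj hadj.symm hβX' hPα.1) hPα.2⟩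
  obtain ⟨y1, hy1, hy1u0, hvy1⟩ := claim u0 hu0
  obtain ⟨y2, hy2, hy2w0, hvy2⟩ := claim w0 hw0
  -- find edge inside class(u0) crossing the neighborhood of v
  -- chain from y1 to u0 inside the class of u0
  have hyu : RIn Δ {z | z ∈ X' ∧ RIn Δ X' z u0} y1 u0 := RIn.restrict hy1u0
  obtain ⟨y', z', ⟨hadj, hy', hz'⟩, hPy', hPz'⟩ :=
    cross (P := fun x => Δ.Adj v x) hyu hvy1 hvu0
  -- P4 : y2 - v - y' - z'
  have hy2y' : ¬ Δ.Adj y2 y' := by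
    intro h
    exact hw0u0 (RIn.trans hy2w0.symm (RIn.trans (RIn.adj h hy2 hy'.1) hy'.2))
  have hy2z' : ¬ Δ.Adj y2 z' := by
    intro h
    exact hw0u0 (RIn.trans hy2w0.symm (RIn.trans (RIn.adj h hy2 hz'.1) hz'.2))
  have ny2y' : y2 ≠ y' := by
    rintro rfl; exact hw0u0 (RIn.trans hy2w0.symm hy'.2)
  have ny2z' : y2 ≠ z' := by
    rintro rfl; exact hw0u0 (RIn.trans hy2w0.symm hz'.2)
  have nvz' : v ≠ z' := fun h => hz'.1.2 h.symm
  have ny2v : y2 ≠ v := fun h => hy2.2 h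
  exact hP4 y2 hy2.1 v hv y' hy'.1.1 z' hz'.1.1 hvy2.symm hPy' hadj hy2y' hy2z' hPz'
    ny2y' ny2z' nvz'

/-- Seinsche-type: a set that is pairwise-connected in both Δ and Δᶜ with no P4 has ≤ 1 vertex. -/
lemma seinsche {Δ : SimpleGraph V} : ∀ (n : ℕ) (X : Set V), X.Finite → X.ncard = n →
    2 ≤ X.ncard → NoP4 Δ X → ConnPairs Δ X → ConnPairs Δᶜ X → False := by
  intro n
  induction n using Nat.strong_induction_on with
  | _ n ih =>
    intro X hfin hcard h2 hP4 hconn hco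
    obtain ⟨v, hv⟩ : X.Nonempty := Set.nonempty_of_ncard_ne_zero (by omega)
    set X' := X \ {v} with hX'
    have hfin' : X'.Finite := hfin.diff
    have hcard' : X'.ncard = n - 1 := by
      rw [hX', Set.ncard_diff_singleton_of_mem hv, hcard]
    by_cases hsmall : X'.ncard ≤ 1
    -- base : exactly two vertices
    · have hn2 : X.ncard = 2 := by omega
      -- take the other vertex
      obtain ⟨w, hw⟩ : X'.Nonempty := by
        apply Set.nonempty_of_ncard_ne_zero
        rw [hcard']; omega
      have hwv : w ≠ v := hw.2
      -- adjacency in Δ from connectivity: first step from v lands in X∖{v}? 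
      -- careful: first step could land anywhere in X; with |X| = 2, lands at w.
      have hXeq : ∀ z ∈ X, z = v ∨ z = w := by
        have hone : X'.ncard = 1 := by omega
        obtain ⟨x0, hx0⟩ := Set.ncard_eq_one.mp hone
        have hwx0 : w = x0 := by rw [hx0] at hw; exact hw
        intro z hz
        by_cases hzv : z = v
        · exact Or.inl hzv
        · right
          have : z ∈ X' := ⟨hz, hzv⟩
          rw [hx0] at this; rw [hwx0]; exact this
      have step1 : Δ.Adj v w := by
        obtain ⟨z, hz, hadj, _⟩ := (hconn v hv w hw.1).first_step (Ne.symm hwv)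
        rcases hXeq z hz with rfl | rfl
        · exact absurd hadj (Δ.irrefl)
        · exact hadj
      have step2 : Δᶜ.Adj v w := by
        obtain ⟨z, hz, hadj, _⟩ := (hco v hv w hw.1).first_step (Ne.symm hwv)
        rcases hXeq z hz with rfl | rfl
        · exact absurd hadj (Δᶜ.irrefl)
        · exact hadj
      exact step2.2 step1
    -- inductive step
    · push_neg at hsmall
      have hsub : X' ⊆ X := Set.diff_subset
      have hP4' : NoP4 Δ X' := fun a ha b hb c hc d hd => hP4 a (hsub ha) b (hsub hb) c (hsub hc) d (hsub hd)
      by_cases hc1 : ConnPairs Δ X'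
      · by_cases hc2 : ConnPairs Δᶜ X'
        · exact ih (n-1) (by omega) X' hfin' hcard' (by omega) hP4' hc1 hc2
        · -- v is Δᶜ-universal on X' by CaseL on Δᶜ; contradicts Δ-connectivity
          have huniv : ∀ w ∈ X', Δᶜ.Adj v w := by
            apply CaseL hP4.compl hco hv
            · simp only [ConnPairs, not_forall] at hc2
              obtain ⟨s, hs, t, ht, hst⟩ := hc2
              exact ⟨s, hs, t, ht, hst⟩
          -- from Δ-conn : v has a Δ-neighbor in X ∖ {v}
          obtain ⟨w, hw⟩ : X'.Nonempty := Set.nonempty_of_ncard_ne_zero (by omega)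
          obtain ⟨z, hz, hadj, _⟩ := (hconn v hv w hw.1).first_step (fun h => hw.2 h.symm)
          have hzv : z ≠ v := fun h => (h ▸ hadj).ne rfl
          exact (huniv z ⟨hz, hzv⟩).2 hadj
      · -- v is Δ-universal on X' by CaseL; contradicts Δᶜ-connectivity
        have huniv : ∀ w ∈ X', Δ.Adj v w := by
          apply CaseL hP4 hconn hv
          · simp only [ConnPairs, not_forall] at hc1
            obtain ⟨s, hs, t, ht, hst⟩ := hc1
            exact ⟨s, hs, t, ht, hst⟩
        obtain ⟨w, hw⟩ : X'.Nonempty := Set.nonempty_of_ncard_ne_zero (by omega)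
        obtain ⟨z, hz, hadj, _⟩ := (hco v hv w hw.1).first_step (fun h => hw.2 h.symm)
        have hzv : z ≠ v := fun h => (h ▸ hadj).ne rfl
        exact hadj.2 (huniv z ⟨hz, hzv⟩)


variable [Fintype V]

/-- Bacsó–Tuza: a (pairwise-)connected `U` in a `P5`-free graph has a dominating set
that is a clique or has at most 3 elements. -/
theorem BT {G : SimpleGraph V} (hP5 : IsP5Free G) (U : Set V)
    (hUne : U.Nonempty) (hUconn : ConnPairs G U) :
    ∃ S : Set V, S ⊆ U ∧ (∀ u ∈ U, u ∈ S ∨ ∃ x ∈ S, G.Adj u x) ∧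
      (G.IsClique S ∨ S.ncard ≤ 3) := by
  classical
  set 𝒳 : Set (Set V) :=
    {X | X ⊆ U ∧ X.Nonempty ∧ ConnPairs G X ∧ (∀ u ∈ U, u ∈ X ∨ ∃ x ∈ X, G.Adj u x)}
      with h𝒳
  have hU𝒳 : U ∈ 𝒳 := ⟨subset_rfl, hUne, hUconn, fun u hu => Or.inl hu⟩
  have hNSne : {n | ∃ X ∈ 𝒳, X.ncard = n}.Nonempty := ⟨U.ncard, U, hU𝒳, rfl⟩
  obtain ⟨X, hX𝒳, hXcard⟩ := Nat.sInf_mem hNSne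
  set n0 := sInf {n | ∃ X ∈ 𝒳, X.ncard = n} with hn0
  have hmin : ∀ Y ∈ 𝒳, n0 ≤ Y.ncard := fun Y hY => Nat.sInf_le ⟨Y, hY, rfl⟩
  obtain ⟨hXU, hXne, hXconn, hXdom⟩ := hX𝒳
  by_cases h3 : X.ncard ≤ 3
  · exact ⟨X, hXU, hXdom, Or.inr h3⟩
  by_cases hclq : G.IsClique X
  · exact ⟨X, hXU, hXdom, Or.inl hclq⟩
  -- a nonadjacent pair
  have hpair : ∃ a1 ∈ X, ∃ a2 ∈ X, a1 ≠ a2 ∧ ¬ G.Adj a1 a2 := by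
    by_contra hc
    push_neg at hc
    exact hclq (fun a ha b hb hab => hc a ha b hb hab)
  obtain ⟨a1, ha1, a2, ha2, hne12, hnadj12⟩ := hpair
  -- X is P4-free
  have hP4 : NoP4 G X := by
    intro a ha b hb c hc d hd hab hbc hcd hac had hbd nac nad nbd
    have hbX' : b ∈ X \ {a} := ⟨hb, fun h => hab.ne (Set.mem_singleton_iff.mp h).symm⟩
    have hcX' : c ∈ X \ {a} := ⟨hc, nac ∘ Eq.symm⟩
    have hdX' : d ∈ X \ {a} := ⟨hd, nad ∘ Eq.symm⟩
    by_cases hcp : ConnPairs G (X \ {a})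
    · -- X∖{a} connected ⇒ it fails domination; private neighbor p of a gives a P5
      have hXa : (X \ {a}) ∈ 𝒳 → False := by
        intro hmem
        have h1 := hmin _ hmem
        have h2 : (X \ {a}).ncard < X.ncard := Set.ncard_diff_singleton_lt_of_mem ha X.toFinite
        omega
      have hndom : ¬ (∀ u ∈ U, u ∈ X \ {a} ∨ ∃ x ∈ X \ {a}, G.Adj u x) := by
        intro hdom
        exact hXa ⟨Set.diff_subset.trans hXU, ⟨b, hbX'⟩, hcp, hdom⟩
      push_neg at hndom
      obtain ⟨p, hpU, hpX', hpnadj⟩ := hndom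
      have hpa : p ≠ a := by
        rintro rfl
        exact hpnadj b hbX' hab
      have hpX : p ∉ X := fun h => hpX' ⟨h, hpa⟩
      have hpadj : G.Adj p a := by
        rcases hXdom p hpU with h | ⟨x, hx, hux⟩
        · exact absurd h hpX
        · rcases eq_or_ne x a with rfl | hxa
          · exact hux
          · exact absurd hux (hpnadj x ⟨hx, hxa⟩)
      exact no_p5 hP5 hpadj hab hbc hcd
        (hpnadj b hbX') (hpnadj c hcX') (hpnadj d hdX') hac had hbd
        (fun h => hpX (h ▸ hb)) (fun h => hpX (h ▸ hc)) (fun h => hpX (h ▸ hd)) nac nad nbd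
    · -- a is a cut vertex: find z adjacent to a, separated from b
      simp only [ConnPairs, not_forall] at hcp
      obtain ⟨s, hs, t, ht, hst⟩ := hcp
      have hw1 : ∃ w1 ∈ X \ {a}, ¬ RIn G (X \ {a}) w1 b := by
        by_cases h1 : RIn G (X \ {a}) s b
        · by_cases h2 : RIn G (X \ {a}) t b
          · exact absurd (h1.trans h2.symm) hst
          · exact ⟨t, ht, h2⟩
        · exact ⟨s, hs, h1⟩
      obtain ⟨w1, hw1X, hw1b⟩ := hw1
      have hcrossed : ∃ x y, (G.Adj x y ∧ x ∈ X ∧ y ∈ X) ∧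
          ((x ∈ X \ {a} ∧ RIn G (X \ {a}) x w1)) ∧ ¬ ((y ∈ X \ {a} ∧ RIn G (X \ {a}) y w1)) :=
        RIn.cross (hXconn w1 hw1X.1 b hb) ⟨hw1X, RIn.rfl⟩
          (by rintro ⟨hbb, hrb⟩; exact hw1b hrb.symm)
      obtain ⟨z, β, ⟨hadjzβ, hαX, hβX⟩, hPα, hPβ⟩ := hcrossed
      have hβa : β = a := by
        by_contra hβa
        exact hPβ ⟨⟨hβX, hβa⟩, (RIn.adj (X := X \ {a}) hadjzβ.symm ⟨hβX, hβa⟩ hPα.1).trans hPα.2⟩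
      have hadj : G.Adj z a := hβa ▸ hadjzβ
      -- z is not adjacent (nor equal) to b, c, d
      have hsep : ∀ y, y ∈ X \ {a} → RIn G (X \ {a}) y b → ¬ G.Adj z y ∧ z ≠ y := by
        intro y hy hyb
        constructor
        · intro hzy
          exact hw1b (((hPα.2.symm).trans (RIn.adj hzy hPα.1 hy)).trans hyb)
        · rintro rfl
          exact hw1b (hPα.2.symm.trans hyb)
      have hrb : RIn G (X \ {a}) b b := RIn.rfl
      have hrc : RIn G (X \ {a}) c b := RIn.adj hbc.symm hcX' hbX'
      have hrd : RIn G (X \ {a}) d b :=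
        (RIn.adj hcd.symm hdX' hcX').trans hrc
      obtain ⟨hzb, nzb⟩ := hsep b hbX' hrb
      obtain ⟨hzc, nzc⟩ := hsep c hcX' hrc
      obtain ⟨hzd, nzd⟩ := hsep d hdX' hrd
      exact no_p5 hP5 hadj hab hbc hcd hzb hzc hzd hac had hbd nzb nzc nzd nac nad nbd
  -- the complement-component of a1 inside X
  set P1 : Set V := {x | x ∈ X ∧ RIn Gᶜ X x a1} with hP1
  have ha1P1 : a1 ∈ P1 := ⟨ha1, RIn.rfl⟩
  have ha2P1 : a2 ∈ P1 := ⟨ha2, RIn.adj (G := Gᶜ)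
    (show Gᶜ.Adj a2 a1 from ⟨hne12.symm, fun h => hnadj12 h.symm⟩) ha2 ha1⟩
  set Q : Set V := X \ P1 with hQdef
  have hP1X : P1 ⊆ X := fun x hx => hx.1
  have hjoin : ∀ p ∈ P1, ∀ q ∈ Q, G.Adj p q := by
    intro p hp q hq
    by_contra hnadj
    have hqp : q ≠ p := fun h => hq.2 (h ▸ hp)
    exact hq.2 ⟨hq.1, (RIn.adj (G := Gᶜ) (show Gᶜ.Adj q p from ⟨hqp, fun h => hnadj h.symm⟩) hq.1 hp.1).trans hp.2⟩
  have hP1chain : ∀ x ∈ P1, RIn Gᶜ P1 x a1 := fun x hx => RIn.restrict hx.2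
  have hP1co : ConnPairs Gᶜ P1 := by
    intro x hx y hy
    exact (hP1chain x hx).trans (hP1chain y hy).symm
  have hP1card : 2 ≤ P1.ncard := by
    have : ({a1, a2} : Set V).ncard = 2 := Set.ncard_pair hne12
    calc 2 = ({a1, a2} : Set V).ncard := this.symm
      _ ≤ P1.ncard := Set.ncard_le_ncard (by
          intro x hx; rcases hx with rfl | rfl
          exacts [ha1P1, ha2P1]) P1.toFinite
  have hNoP4P1 : NoP4 G P1 := fun a ha b hb c hc d hd =>
    hP4 a (hP1X ha) b (hP1X hb) c (hP1X hc) d (hP1X hd)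
  by_cases hQe : Q.Nonempty
  case neg =>
    -- Q empty : X = P1 is co-connected, contradiction with seinsche
    exfalso
    have hXP1 : ∀ x ∈ X, x ∈ P1 := by
      intro x hx
      by_contra hc
      exact hQe ⟨x, hx, hc⟩
    have hco : ConnPairs Gᶜ X := by
      intro x hx y hy
      exact ((hXP1 x hx).2).trans ((hXP1 y hy).2).symm
    exact seinsche X.ncard X X.toFinite rfl (by omega) hP4 hXconn hco
  case pos =>
  obtain ⟨q0, hq0⟩ := hQe
  have hq0X : q0 ∈ X := hq0.1
  -- private neighbors
  have privgen : ∀ a ∈ P1, (∃ b0 ∈ P1, b0 ≠ a) →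
      ∃ p, p ∈ U ∧ p ∉ X ∧ G.Adj p a ∧ ∀ x ∈ X, x ≠ a → ¬G.Adj p x := by
    intro a haP1 ⟨b0, hb0P1, hb0a⟩
    have hq0a : q0 ≠ a := fun h => hq0.2 (h ▸ haP1)
    have hconn' : ConnPairs G (X \ {a}) := by
      have route : ∀ z ∈ X \ {a}, RIn G (X \ {a}) z q0 := by
        intro z hz
        have hq0m : q0 ∈ X \ {a} := ⟨hq0X, hq0a⟩
        by_cases hzP1 : z ∈ P1
        · exact RIn.adj (hjoin z hzP1 q0 hq0) hz hq0m
        · -- z ∈ Q : go z — b0 — q0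
          have hzQ : z ∈ Q := ⟨hz.1, hzP1⟩
          have hb0m : b0 ∈ X \ {a} := ⟨hP1X hb0P1, hb0a⟩
          exact (RIn.adj (hjoin b0 hb0P1 z hzQ).symm hz hb0m).trans
            (RIn.adj (hjoin b0 hb0P1 q0 hq0) hb0m hq0m)
      intro x hx y hy
      exact (route x hx).trans (route y hy).symm
    have hXa : (X \ {a}) ∈ 𝒳 → False := by
      intro hmem
      have h1 := hmin _ hmem
      have h2 : (X \ {a}).ncard < X.ncard :=
        Set.ncard_diff_singleton_lt_of_mem (hP1X haP1) X.toFinite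
      omega
    have hndom : ¬ (∀ u ∈ U, u ∈ X \ {a} ∨ ∃ x ∈ X \ {a}, G.Adj u x) := by
      intro hdom
      exact hXa ⟨Set.diff_subset.trans hXU, ⟨q0, hq0X, hq0a⟩, hconn', hdom⟩
    push_neg at hndom
    obtain ⟨p, hpU, hpX', hpnadj⟩ := hndom
    have hpa : p ≠ a := by
      rintro rfl
      exact hpnadj q0 ⟨hq0X, hq0a⟩ (hjoin p haP1 q0 hq0)
    have hpX : p ∉ X := fun h => hpX' ⟨h, hpa⟩
    have hpadj : G.Adj p a := by
      rcases hXdom p hpU with h | ⟨x, hx, hux⟩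
      · exact absurd h hpX
      · rcases eq_or_ne x a with rfl | hxa
        · exact hux
        · exact absurd hux (hpnadj x ⟨hx, hxa⟩)
    exact ⟨p, hpU, hpX, hpadj, fun x hx hxa h => hpnadj x ⟨hx, hxa⟩ h⟩
  -- cardinality of X splits as P1 + Q
  have hcardsplit : Q.ncard + P1.ncard = X.ncard :=
    Set.ncard_diff_add_ncard_of_subset hP1X X.toFinite
  have hstepP1 : ∀ x ∈ P1, ∀ y ∈ P1, G.Adj x y → RIn G P1 x y :=
    fun x hx y hy h => RIn.adj h hx hy
  by_cases hsing : ∃ a ∈ P1, ∀ x ∈ P1, x ≠ a → ¬ RIn G P1 x a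
  · obtain ⟨a, haP1, hsa⟩ := hsing
    have hb0 : ∃ b0 ∈ P1, b0 ≠ a := by
      rcases eq_or_ne a1 a with rfl | h
      · exact ⟨a2, ha2P1, fun h => hne12 h.symm⟩
      · exact ⟨a1, ha1P1, h⟩
    obtain ⟨p_a, hpaU, hpaX, hpaadj, hpapriv⟩ := privgen a haP1 hb0
    have hnadjP1a : ∀ x ∈ P1, x ≠ a → ¬ G.Adj x a := by
      intro x hx hxa hadj
      exact hsa x hx hxa (RIn.adj hadj hx haP1)
    have hq0a : q0 ≠ a := fun h => hq0.2 (h ▸ haP1)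
    by_cases h1a : ∃ c0 ∈ P1, ∃ d0 ∈ P1, c0 ≠ a ∧ d0 ≠ a ∧ c0 ≠ d0
    · -- Kill-1 : |P1| ≥ 3 with a singleton class gives a smaller member of 𝒳
      exfalso
      obtain ⟨c0, hc0, d0, hd0, hc0a, hd0a, hc0d0⟩ := h1a
      set X' : Set V := insert a (insert p_a Q) with hX'
      have haX' : a ∈ X' := Set.mem_insert _ _
      have hpaX' : p_a ∈ X' := by right; left; rfl
      have hq0X' : q0 ∈ X' := by right; right; exact hq0
      have hX'sub : X' ⊆ U := by
        intro x hx
        rcases hx with rfl | hx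
        · exact hXU (hP1X haP1)
        · rcases hx with rfl | hx
          · exact hpaU
          · exact hXU hx.1
      have hpana : p_a ≠ a := fun h => hpaX (h ▸ hP1X haP1)
      have hrt : ∀ z ∈ X', RIn G X' z a := by
        intro z hz
        rcases hz with rfl | hz
        · exact RIn.rfl
        · rcases hz with rfl | hz
          · exact RIn.adj hpaadj hpaX' haX'
          · exact RIn.adj (hjoin a haP1 z hz).symm (by right; right; exact hz) haX'
      have hX'conn : ConnPairs G X' := fun x hx y hy => (hrt x hx).trans (hrt y hy).symm
      have hX'dom : ∀ u ∈ U, u ∈ X' ∨ ∃ x ∈ X', G.Adj u x := by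
        intro u hu
        by_contra hcon
        push_neg at hcon
        obtain ⟨huX', hunadj⟩ := hcon
        have huX : u ∉ X := by
          intro huX
          have huP1 : u ∈ P1 := by
            by_contra hc
            exact huX' (by right; right; exact ⟨huX, hc⟩)
          exact hunadj q0 hq0X' (hjoin u huP1 q0 hq0)
        obtain ⟨x, hxX, hxadj⟩ : ∃ x ∈ X, G.Adj u x := by
          rcases hXdom u hu with h | h
          · exact absurd h huX
          · exact h
        have hxP1 : x ∈ P1 := by
          by_contra hc
          exact hunadj x (by right; right; exact ⟨hxX, hc⟩) hxadj
        have hxa : x ≠ a := by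
          rintro rfl
          exact hunadj x haX' hxadj
        exact no_p5 hP5 hxadj (hjoin x hxP1 q0 hq0) (hjoin a haP1 q0 hq0).symm hpaadj.symm
          (hunadj q0 hq0X') (hunadj a haX') (hunadj p_a hpaX')
          (hnadjP1a x hxP1 hxa)
          (fun h => hpapriv x hxX hxa h.symm)
          (fun h => hpapriv q0 hq0X hq0a h.symm)
          (fun h => huX (h ▸ hq0X)) (fun h => huX (h ▸ hP1X haP1))
          (fun h => huX' (h ▸ hpaX')) hxa
          (fun h => hpaX (h ▸ hxX)) (fun h => hpaX (h ▸ hq0X))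
      have hX'𝒳 : X' ∈ 𝒳 := ⟨hX'sub, ⟨a, haX'⟩, hX'conn, hX'dom⟩
      have hpaQ : p_a ∉ Q := fun h => hpaX h.1
      have haiQ : a ∉ insert p_a Q := by
        intro h
        rcases h with h | h
        · exact hpana h.symm
        · exact h.2 haP1
      have hcardX' : X'.ncard = Q.ncard + 2 := by
        rw [hX', Set.ncard_insert_of_notMem haiQ, Set.ncard_insert_of_notMem hpaQ]
      have hP13 : 3 ≤ P1.ncard := by
        have hsub3 : ({a, c0, d0} : Set V) ⊆ P1 := by
          intro x hx
          rcases hx with rfl | rfl | rfl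
          exacts [haP1, hc0, hd0]
        have h3card : ({a, c0, d0} : Set V).ncard = 3 := by
          rw [Set.ncard_insert_of_notMem (by
            simp only [Set.mem_insert_iff, Set.mem_singleton_iff]
            rintro (rfl | rfl)
            exacts [hc0a rfl, hd0a rfl]),
            Set.ncard_insert_of_notMem (by
              simp only [Set.mem_singleton_iff]
              exact hc0d0), Set.ncard_singleton]
        calc 3 = ({a, c0, d0} : Set V).ncard := h3card.symm
          _ ≤ P1.ncard := Set.ncard_le_ncard hsub3 P1.toFinite
      have := hmin X' hX'𝒳
      omega
    · -- the (α) case : P1 = {a, b0}, dominating triple {a, p_a, p_b}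
      push_neg at h1a
      obtain ⟨b0, hb0P1, hb0a⟩ := hb0
      have hP1eq : ∀ x ∈ P1, x ≠ a → x = b0 := by
        intro x hx hxa
        by_contra hxb
        exact hxb (h1a x hx b0 hb0P1 hxa hb0a)
      obtain ⟨p_b, hpbU, hpbX, hpbadj, hpbpriv⟩ := privgen b0 hb0P1 ⟨a, haP1, fun h => hb0a h.symm⟩
      have hnab : ¬ G.Adj a b0 := fun h => hnadjP1a b0 hb0P1 hb0a h.symm
      have hq0b : q0 ≠ b0 := fun h => hq0.2 (h ▸ hb0P1)
      have hab0' : a ≠ b0 := fun h => hb0a h.symm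
      have hpapb : G.Adj p_a p_b := by
        by_contra hpp
        exact no_p5 hP5 hpaadj (hjoin a haP1 q0 hq0) (hjoin b0 hb0P1 q0 hq0).symm hpbadj.symm
          (hpapriv q0 hq0X hq0a)
          (hpapriv b0 (hP1X hb0P1) hb0a)
          hpp
          hnab
          (fun h => hpbpriv a (hP1X haP1) hab0' h.symm)
          (fun h => hpbpriv q0 hq0X hq0b h.symm)
          (fun h => hpaX (h ▸ hq0X)) (fun h => hpaX (h ▸ hP1X hb0P1))
          (fun h => (hpapriv b0 (hP1X hb0P1) hb0a) (h ▸ hpbadj))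
          hab0'
          (fun h => hpbX (h.symm ▸ hP1X haP1))
          (fun h => hpbX (h ▸ hq0X))
      set S : Set V := insert a (insert p_a {p_b}) with hS
      have haS : a ∈ S := Set.mem_insert _ _
      have hpaS : p_a ∈ S := by right; left; rfl
      have hpbS : p_b ∈ S := by right; right; rfl
      have hSU : S ⊆ U := by
        intro x hx
        rcases hx with rfl | hx
        · exact hXU (hP1X haP1)
        · rcases hx with rfl | hx
          · exact hpaU
          · rw [Set.mem_singleton_iff] at hx
            exact hx ▸ hpbU
      have hcard3 : S.ncard ≤ 3 := by
        apply le_trans (Set.ncard_insert_le _ _)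
        have h2 : (insert p_a {p_b} : Set V).ncard ≤ 2 := by
          apply le_trans (Set.ncard_insert_le _ _)
          simp [Set.ncard_singleton]
        omega
      have hSdom : ∀ u ∈ U, u ∈ S ∨ ∃ x ∈ S, G.Adj u x := by
        intro u hu
        by_contra hcon
        push_neg at hcon
        obtain ⟨huS, hunadj⟩ := hcon
        by_cases huX : u ∈ X
        · by_cases huP1 : u ∈ P1
          · rcases eq_or_ne u a with rfl | hua
            · exact huS haS
            · have hub : u = b0 := hP1eq u huP1 hua
              exact hunadj p_b hpbS (hub ▸ hpbadj.symm)
          · exact hunadj a haS (hjoin a haP1 u ⟨huX, huP1⟩).symm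
        · obtain ⟨x, hxX, hxadj⟩ : ∃ x ∈ X, G.Adj u x := by
            rcases hXdom u hu with h | h
            · exact absurd h huX
            · exact h
          by_cases hq' : ∃ q' ∈ Q, G.Adj u q'
          · obtain ⟨q', hq'Q, huq'⟩ := hq'
            have hq'X := hq'Q.1
            have hq'a : q' ≠ a := fun h => hq'Q.2 (h ▸ haP1)
            have hq'b : q' ≠ b0 := fun h => hq'Q.2 (h ▸ hb0P1)
            exact no_p5 hP5 hpapb.symm hpaadj (hjoin a haP1 q' hq'Q) huq'.symm
              (hpbpriv a (hP1X haP1) hab0')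
              (hpbpriv q' hq'X hq'b)
              (fun h => hunadj p_b hpbS h.symm)
              (hpapriv q' hq'X hq'a)
              (fun h => hunadj p_a hpaS h.symm)
              (fun h => hunadj a haS h.symm)
              (fun h => hpbX (h ▸ hP1X haP1))
              (fun h => hpbX (h ▸ hq'X))
              (fun h => huS (h ▸ hpbS))
              (fun h => hpaX (h ▸ hq'X))
              (fun h => huS (h ▸ hpaS))
              (fun h => huS (h ▸ haS))
          · push_neg at hq'
            have hxP1 : x ∈ P1 := by
              by_contra hc
              exact hq' x ⟨hxX, hc⟩ hxadj
            have hxa : x ≠ a := fun h => hunadj a haS (h ▸ hxadj)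
            have hxb : x = b0 := hP1eq x hxP1 hxa
            exact no_p5 hP5 (hxb ▸ hxadj) (hjoin b0 hb0P1 q0 hq0) (hjoin a haP1 q0 hq0).symm
              hpaadj.symm
              (hq' q0 hq0)
              (hunadj a haS)
              (hunadj p_a hpaS)
              (fun h => hnab h.symm)
              (fun h => hpapriv b0 (hP1X hb0P1) hb0a h.symm)
              (fun h => hpapriv q0 hq0X hq0a h.symm)
              (fun h => huX (h ▸ hq0X)) (fun h => huX (h ▸ hP1X haP1))
              (fun h => huS (h ▸ hpaS)) hb0a
              (fun h => hpaX (h.symm ▸ hP1X hb0P1))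
              (fun h => hpaX (h ▸ hq0X))
      exact ⟨S, hSU, hSdom, Or.inr hcard3⟩
  · -- Kill-2 : every class of P1 has ≥ 2 elements ; contradiction
    exfalso
    push_neg at hsing
    have hnconn : ¬ ConnPairs G P1 := by
      intro hcp
      exact seinsche P1.ncard P1 P1.toFinite rfl hP1card hNoP4P1 hcp hP1co
    simp only [ConnPairs, not_forall] at hnconn
    obtain ⟨s, hsP1, t, htP1, hst⟩ := hnconn
    have hts : ¬ RIn G P1 t s := fun h => hst h.symm
    have hnst : s ≠ t := by rintro rfl; exact hst RIn.rfl
    obtain ⟨x1, hx1P1, hx1s, hx1r⟩ := hsing s hsP1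
    obtain ⟨y1, hy1P1, hy1t, hy1r⟩ := hsing t htP1
    have hy1A : ¬ RIn G P1 y1 s := fun h => hst (h.symm.trans hy1r)
    have hcrossn : ∀ x ∈ P1, RIn G P1 x s → ∀ y ∈ P1, ¬ RIn G P1 y s →
        ¬ G.Adj x y ∧ x ≠ y := by
      intro x hx hxs y hy hys
      constructor
      · intro h
        exact hys ((RIn.adj h.symm hy hx).trans hxs)
      · rintro rfl; exact hys hxs
    obtain ⟨p_s, hpsU, hpsX, hpsadj, hpspriv⟩ := privgen s hsP1 ⟨t, htP1, Ne.symm hnst⟩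
    obtain ⟨p_t, hptU, hptX, hptadj, hptpriv⟩ := privgen t htP1 ⟨s, hsP1, hnst⟩
    have hq0s : q0 ≠ s := fun h => hq0.2 (h ▸ hsP1)
    have hq0t : q0 ≠ t := fun h => hq0.2 (h ▸ htP1)
    have hnadjst : ¬ G.Adj s t := fun h => hst (RIn.adj h hsP1 htP1)
    have hpspt : G.Adj p_s p_t := by
      by_contra hpp
      exact no_p5 hP5 hpsadj (hjoin s hsP1 q0 hq0) (hjoin t htP1 q0 hq0).symm hptadj.symm
        (hpspriv q0 hq0X hq0s)
        (hpspriv t (hP1X htP1) (Ne.symm hnst))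
        hpp
        hnadjst
        (fun h => hptpriv s (hP1X hsP1) hnst h.symm)
        (fun h => hptpriv q0 hq0X hq0t h.symm)
        (fun h => hpsX (h ▸ hq0X)) (fun h => hpsX (h ▸ hP1X htP1))
        (fun h => (hpspriv t (hP1X htP1) (Ne.symm hnst)) (h ▸ hptadj))
        hnst
        (fun h => hptX (h.symm ▸ hP1X hsP1))
        (fun h => hptX (h ▸ hq0X))
    set X'' : Set V := insert s (insert p_s (insert p_t Q)) with hX''
    have hsX'' : s ∈ X'' := Set.mem_insert _ _
    have hpsX'' : p_s ∈ X'' := by right; left; rfl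
    have hptX'' : p_t ∈ X'' := by right; right; left; rfl
    have hq0X'' : q0 ∈ X'' := by right; right; right; exact hq0
    have hX''sub : X'' ⊆ U := by
      intro x hx
      rcases hx with rfl | hx
      · exact hXU (hP1X hsP1)
      · rcases hx with rfl | hx
        · exact hpsU
        · rcases hx with rfl | hx
          · exact hptU
          · exact hXU hx.1
    have hrt : ∀ z ∈ X'', RIn G X'' z s := by
      intro z hz
      rcases hz with rfl | hz
      · exact RIn.rfl
      · rcases hz with rfl | hz
        · exact RIn.adj hpsadj hpsX'' hsX''
        · rcases hz with rfl | hz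
          · exact (RIn.adj hpspt.symm hptX'' hpsX'').trans (RIn.adj hpsadj hpsX'' hsX'')
          · exact RIn.adj (hjoin s hsP1 z hz).symm (by right; right; right; exact hz) hsX''
    have hX''conn : ConnPairs G X'' := fun x hx y hy => (hrt x hx).trans (hrt y hy).symm
    have hX''dom : ∀ u ∈ U, u ∈ X'' ∨ ∃ x ∈ X'', G.Adj u x := by
      intro u hu
      by_contra hcon
      push_neg at hcon
      obtain ⟨huX'', hunadj⟩ := hcon
      have huX : u ∉ X := by
        intro huX
        have huP1 : u ∈ P1 := by
          by_contra hc
          exact huX'' (by right; right; right; exact ⟨huX, hc⟩)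
        exact hunadj q0 hq0X'' (hjoin u huP1 q0 hq0)
      obtain ⟨x, hxX, hxadj⟩ : ∃ x ∈ X, G.Adj u x := by
        rcases hXdom u hu with h | h
        · exact absurd h huX
        · exact h
      have hxP1 : x ∈ P1 := by
        by_contra hc
        exact hunadj x (by right; right; right; exact ⟨hxX, hc⟩) hxadj
      have hxs : x ≠ s := by
        rintro rfl
        exact hunadj x hsX'' hxadj
      -- common shape : a P1-neighbor of u outside the class of s gives a P5
      have killshape : ∀ x' ∈ P1, ¬ RIn G P1 x' s → G.Adj u x' → False := by
        intro x' hx'P1 hx'A hux'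
        have hx's : ¬ G.Adj x' s ∧ x' ≠ s := by
          have := hcrossn s hsP1 RIn.rfl x' hx'P1 hx'A
          exact ⟨fun h => this.1 h.symm, fun h => this.2 h.symm⟩
        exact no_p5 hP5 hux' (hjoin x' hx'P1 q0 hq0) (hjoin s hsP1 q0 hq0).symm hpsadj.symm
          (hunadj q0 hq0X'') (hunadj s hsX'') (hunadj p_s hpsX'')
          hx's.1
          (fun h => hpspriv x' (hP1X hx'P1) hx's.2 h.symm)
          (fun h => hpspriv q0 hq0X hq0s h.symm)
          (fun h => huX (h ▸ hq0X)) (fun h => huX (h ▸ hP1X hsP1))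
          (fun h => huX'' (h ▸ hpsX'')) hx's.2
          (fun h => hpsX (h ▸ hP1X hx'P1)) (fun h => hpsX (h ▸ hq0X))
      by_cases hxA : RIn G P1 x s
      · -- x in class of s ; u has no neighbor outside the class, in particular not t
        by_cases hyB : ∃ y ∈ P1, ¬ RIn G P1 y s ∧ G.Adj u y
        · obtain ⟨y, hyP1, hyA, huy⟩ := hyB
          exact killshape y hyP1 hyA huy
        · push_neg at hyB
          have hut : ¬ G.Adj u t := hyB t htP1 hts
          have hxt : ¬ G.Adj x t ∧ x ≠ t := hcrossn x hxP1 hxA t htP1 hts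
          exact no_p5 hP5 hxadj (hjoin x hxP1 q0 hq0) (hjoin t htP1 q0 hq0).symm hptadj.symm
            (hunadj q0 hq0X'') hut (hunadj p_t hptX'')
            hxt.1
            (fun h => hptpriv x hxX hxt.2 h.symm)
            (fun h => hptpriv q0 hq0X hq0t h.symm)
            (fun h => huX (h ▸ hq0X)) (fun h => huX (h ▸ hP1X htP1))
            (fun h => huX'' (h ▸ hptX'')) hxt.2
            (fun h => hptX (h ▸ hxX)) (fun h => hptX (h ▸ hq0X))
      · exact killshape x hxP1 hxA hxadj
    have hX''𝒳 : X'' ∈ 𝒳 := ⟨hX''sub, ⟨s, hsX''⟩, hX''conn, hX''dom⟩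
    have hptQ : p_t ∉ Q := fun h => hptX h.1
    have hpsQ : p_s ∉ insert p_t Q := by
      intro h
      rcases h with h | h
      · exact (hpspriv t (hP1X htP1) (Ne.symm hnst)) (h ▸ hptadj)
      · exact hpsX h.1
    have hsQ : s ∉ insert p_s (insert p_t Q) := by
      intro h
      rcases h with h | h
      · exact hpsX (h ▸ hP1X hsP1)
      · rcases h with h | h
        · exact hptX (h ▸ hP1X hsP1)
        · exact h.2 hsP1
    have hcardX'' : X''.ncard = Q.ncard + 3 := by
      rw [hX'', Set.ncard_insert_of_notMem hsQ, Set.ncard_insert_of_notMem hpsQ,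
        Set.ncard_insert_of_notMem hptQ]
    -- |P1| ≥ 4
    have hP14 : 4 ≤ P1.ncard := by
      have hy1s : y1 ≠ s := by rintro rfl; exact hy1A RIn.rfl
      have hx1t : x1 ≠ t := by rintro rfl; exact hts hx1r
      have hx1y1 : x1 ≠ y1 := by rintro rfl; exact hy1A hx1r
      have hsub4 : ({s, x1, t, y1} : Set V) ⊆ P1 := by
        intro x hx
        rcases hx with rfl | rfl | rfl | rfl
        exacts [hsP1, hx1P1, htP1, hy1P1]
      have h4card : ({s, x1, t, y1} : Set V).ncard = 4 := by
        rw [Set.ncard_insert_of_notMem (by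
            simp only [Set.mem_insert_iff, Set.mem_singleton_iff]
            rintro (rfl | rfl | rfl)
            exacts [hx1s rfl, hnst rfl, hy1s rfl]),
          Set.ncard_insert_of_notMem (by
            simp only [Set.mem_insert_iff, Set.mem_singleton_iff]
            rintro (rfl | rfl)
            exacts [hx1t rfl, hx1y1 rfl]),
          Set.ncard_insert_of_notMem (by
            simp only [Set.mem_singleton_iff]
            rintro rfl
            exact hy1t rfl), Set.ncard_singleton]
      calc 4 = ({s, x1, t, y1} : Set V).ncard := h4card.symm
        _ ≤ P1.ncard := Set.ncard_le_ncard hsub4 P1.toFinite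
    have := hmin X'' hX''𝒳
    omega

end P5Work

namespace P5Work
variable {V : Type*} [Fintype V]

lemma connpairs_of_induce_conn {G : SimpleGraph V} {C : Set V}
    (h : (G.induce C).Connected) : ConnPairs G C := by
  intro a ha b hb
  obtain ⟨w⟩ := h.preconnected ⟨a, ha⟩ ⟨b, hb⟩
  have aux : ∀ {x y : ↥C}, (G.induce C).Walk x y → RIn G C x.1 y.1 := by
    intro x y w
    induction w with
    | nil => exact RIn.rfl
    | cons h p ih =>
      rename_i u v _
      exact (RIn.adj (SimpleGraph.comap_adj.mp h) u.2 v.2).trans ih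
  exact aux w

end P5Work

open P5Work in
theorem stmt7 {V : Type*} [Fintype V] (k : ℕ) (hk : 1 ≤ k)
    (G : SimpleGraph V) (hP5 : IsP5Free G)
    (C : Set V) (hCne : C.Nonempty) (hCconn : (G.induce C).Connected)
    (hclique : ∀ s : Finset V, (↑s : Set V) ⊆ C → G.IsClique (↑s : Set V) → s.card ≤ k)
    (D : Set V) (hDC : D ⊆ C)
    (hdom : ∀ v ∈ C, v ∈ D ∨ ∃ d ∈ D, G.Adj v d)
    (R : Set V)
    (hR : R = {v : V | v ∉ C ∧ (∃ c ∈ C, G.Adj v c) ∧ ¬ ∃ d ∈ D, G.Adj v d})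
    (hmod : ∀ K : (G.induce R).ConnectedComponent, IsModule G (Subtype.val '' K.supp)) :
    ∃ Dt : Set V, D ⊆ Dt ∧ Dt ⊆ R ∪ C ∧
      (∀ v ∈ R ∪ C, v ∈ Dt ∨ ∃ d ∈ Dt, G.Adj v d) ∧
      (Dt \ D).ncard ≤ max (k + 1) 3 := by
  classical
  have hRprop : ∀ r ∈ R, r ∉ C ∧ (∃ c ∈ C, G.Adj r c) := by
    rw [hR]; rintro r ⟨h1, h2, _⟩; exact ⟨h1, h2⟩
  set U : Set V := R ∪ C with hU
  have hCU : C ⊆ U := Set.subset_union_right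
  have hCpairs : ConnPairs G C := connpairs_of_induce_conn hCconn
  have hUconn : ConnPairs G U := by
    have toC : ∀ u ∈ U, ∃ c ∈ C, RIn G U u c := by
      intro u hu
      rcases hu with hu | hu
      · obtain ⟨h1, c, hc, hadj⟩ := hRprop u hu
        exact ⟨c, hc, RIn.adj hadj (Or.inl hu) (Or.inr hc)⟩
      · exact ⟨u, hu, RIn.rfl⟩
    intro a ha b hb
    obtain ⟨ca, hca, hra⟩ := toC a ha
    obtain ⟨cb, hcb, hrb⟩ := toC b hb
    exact (hra.trans (RIn.mono hCU (hCpairs ca hca cb hcb))).trans hrb.symm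
  have hUne : U.Nonempty := ⟨hCne.choose, Or.inr hCne.choose_spec⟩
  obtain ⟨S, hSU, hSdom, hScase⟩ := BT hP5 U hUne hUconn
  have hDdt : ∀ (T : Set V), ∀ v ∈ C, v ∈ D ∪ T ∨ ∃ d ∈ D ∪ T, G.Adj v d := by
    intro T v hv
    rcases hdom v hv with h | ⟨d, hd, hadj⟩
    · exact Or.inl (Or.inl h)
    · exact Or.inr ⟨d, Or.inl hd, hadj⟩
  rcases hScase with hclqS | h3S
  · by_cases hSR : (S ∩ R).Nonempty
    · -- clique case with a vertex in R : swap the R-part for one C-neighbor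
      obtain ⟨r0, hr0S, hr0R⟩ := hSR
      obtain ⟨c0, hc0C, hc0adj⟩ := (hRprop r0 hr0R).2
      set K := (G.induce R).connectedComponentMk ⟨r0, hr0R⟩ with hK
      have hr0img : r0 ∈ Subtype.val '' K.supp := ⟨⟨r0, hr0R⟩, rfl, rfl⟩
      have himgR : Subtype.val '' K.supp ⊆ R := by rintro x ⟨y, _, rfl⟩; exact y.2
      have hc0img : c0 ∉ Subtype.val '' K.supp := fun h => (hRprop c0 (himgR h)).1 hc0C
      have hc0all : ∀ v ∈ Subtype.val '' K.supp, G.Adj v c0 := by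
        intro v hv
        exact (hmod K r0 hr0img v hv c0 hc0img).mp hc0adj
      have memK : ∀ (v : V) (hv : v ∈ R),
          (G.induce R).connectedComponentMk ⟨v, hv⟩ = K → v ∈ Subtype.val '' K.supp :=
        fun v hv h => ⟨⟨v, hv⟩, h, rfl⟩
      refine ⟨D ∪ ((S ∩ C) ∪ {c0}), Set.subset_union_left, ?_, ?_, ?_⟩
      · intro x hx
        rcases hx with hx | hx | hx
        · exact Or.inr (hDC hx)
        · exact Or.inr hx.2
        · exact Or.inr (hx ▸ hc0C)
      · intro v hv
        rcases hv with hvR | hvC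
        · by_cases hvK : v ∈ Subtype.val '' K.supp
          · exact Or.inr ⟨c0, Or.inr (Or.inr rfl), hc0all v hvK⟩
          · rcases hSdom v (Or.inl hvR) with hvS | ⟨x, hxS, hadj⟩
            · exfalso
              apply hvK
              apply memK v hvR
              rcases eq_or_ne v r0 with h | hvr
              · rw [hK]; exact congrArg _ (Subtype.ext h)
              · have hadj : G.Adj v r0 := hclqS hvS hr0S hvr
                exact SimpleGraph.ConnectedComponent.sound
                  ((SimpleGraph.comap_adj.mpr hadj :
                    (G.induce R).Adj ⟨v, hvR⟩ ⟨r0, hr0R⟩).reachable)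
            · by_cases hxC : x ∈ C
              · exact Or.inr ⟨x, Or.inr (Or.inl ⟨hxS, hxC⟩), hadj⟩
              · exfalso
                have hxR : x ∈ R := (hSU hxS).resolve_right hxC
                apply hvK
                apply memK v hvR
                have h1 : (G.induce R).connectedComponentMk ⟨v, hvR⟩ =
                    (G.induce R).connectedComponentMk ⟨x, hxR⟩ :=
                  SimpleGraph.ConnectedComponent.sound
                    ((SimpleGraph.comap_adj.mpr hadj :
                      (G.induce R).Adj ⟨v, hvR⟩ ⟨x, hxR⟩).reachable)
                rw [h1]
                rcases eq_or_ne x r0 with h | hxr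
                · rw [hK]; exact congrArg _ (Subtype.ext h)
                · exact SimpleGraph.ConnectedComponent.sound
                    ((SimpleGraph.comap_adj.mpr (hclqS hxS hr0S hxr) :
                      (G.induce R).Adj ⟨x, hxR⟩ ⟨r0, hr0R⟩).reachable)
        · exact hDdt _ v hvC
      · -- cardinality bound : ≤ k + 1
        have hsub : (D ∪ ((S ∩ C) ∪ {c0})) \ D ⊆ insert c0 (S ∩ C) := by
          intro x hx
          rcases hx.1 with h | h | h
          · exact absurd h hx.2
          · exact Or.inr h
          · exact Or.inl h
        have hSCk : (S ∩ C).ncard ≤ k := by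
          have hfin := (S ∩ C).toFinite
          have hcoe : (hfin.toFinset : Set V) = S ∩ C := hfin.coe_toFinset
          have := hclique hfin.toFinset (by rw [hcoe]; exact Set.inter_subset_right)
            (by rw [hcoe]; exact hclqS.subset Set.inter_subset_left)
          rwa [Set.ncard_eq_toFinset_card _ hfin]
        have h1 : ((D ∪ ((S ∩ C) ∪ {c0})) \ D).ncard ≤ (insert c0 (S ∩ C)).ncard :=
          Set.ncard_le_ncard hsub (Set.toFinite _)
        have h2 : (insert c0 (S ∩ C)).ncard ≤ (S ∩ C).ncard + 1 := Set.ncard_insert_le _ _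
        have h3 : k + 1 ≤ max (k + 1) 3 := le_max_left _ _
        omega
    · -- clique case, S ⊆ C
      have hSC : S ⊆ C := fun x hx => (hSU hx).resolve_left (fun hR' => hSR ⟨x, hx, hR'⟩)
      refine ⟨D ∪ S, Set.subset_union_left, ?_, ?_, ?_⟩
      · intro x hx
        rcases hx with hx | hx
        · exact Or.inr (hDC hx)
        · exact Or.inr (hSC hx)
      · intro v hv
        rcases hSdom v hv with h | ⟨x, hxS, hadj⟩
        · exact Or.inl (Or.inr h)
        · exact Or.inr ⟨x, Or.inr hxS, hadj⟩
      · have hsub : (D ∪ S) \ D ⊆ S := by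
          intro x hx
          rcases hx.1 with h | h
          · exact absurd h hx.2
          · exact h
        have hSk : S.ncard ≤ k := by
          have hfin := S.toFinite
          have hcoe : (hfin.toFinset : Set V) = S := hfin.coe_toFinset
          have := hclique hfin.toFinset (by rw [hcoe]; exact hSC)
            (by rw [hcoe]; exact hclqS)
          rwa [Set.ncard_eq_toFinset_card _ hfin]
        have h1 : ((D ∪ S) \ D).ncard ≤ S.ncard := Set.ncard_le_ncard hsub (Set.toFinite _)
        have h3 : k + 1 ≤ max (k + 1) 3 := le_max_left _ _
        omega
  · -- small case : |S| ≤ 3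
    refine ⟨D ∪ S, Set.subset_union_left, ?_, ?_, ?_⟩
    · intro x hx
      rcases hx with hx | hx
      · exact Or.inr (hDC hx)
      · exact hSU hx
    · intro v hv
      rcases hSdom v hv with h | ⟨x, hxS, hadj⟩
      · exact Or.inl (Or.inr h)
      · exact Or.inr ⟨x, Or.inr hxS, hadj⟩
    · have hsub : (D ∪ S) \ D ⊆ S := by
        intro x hx
        rcases hx.1 with h | h
        · exact absurd h hx.2
        · exact h
      have h1 : ((D ∪ S) \ D).ncard ≤ S.ncard := Set.ncard_le_ncard hsub (Set.toFinite _)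
      have h3 : (3 : ℕ) ≤ max (k + 1) 3 := le_max_right _ _
      omega
end

section
/- Let G be a finite simple graph, let C ⊆ V(G), and let D ⊆ C. Let R be the set of vertices v ∉ C that have a neighbor in C but no neighbor in D, and let Y be the set of vertices v ∉ C that have no neighbor in C. Suppose that no edge of G has one endpoint in R and the other in Y. Let D' ⊆ R ∪ C be such that every vertex of R ∪ C is in D ∪ D' or has a neighbor in D ∪ D'. Then N[D ∪ D'] = N[C], where for a vertex set S, N[S] denotes S together with all vertices having a neighbor in S. -/
theorem stmt8 {V : Type*} [Fintype V] (G : SimpleGraph V)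
    (C D : Set V) (hDC : D ⊆ C)
    (R Y : Set V)
    (hR : R = {v : V | v ∉ C ∧ (∃ c ∈ C, G.Adj v c) ∧ ¬ ∃ d ∈ D, G.Adj v d})
    (hY : Y = {v : V | v ∉ C ∧ ¬ ∃ c ∈ C, G.Adj v c})
    (hnoedge : ∀ r ∈ R, ∀ y ∈ Y, ¬ G.Adj r y)
    (D' : Set V) (hD'sub : D' ⊆ R ∪ C)
    (hdom : ∀ v ∈ R ∪ C, v ∈ D ∪ D' ∨ ∃ d ∈ D ∪ D', G.Adj v d) :
    closedNbhd G (D ∪ D') = closedNbhd G C := by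
  ext v
  simp only [closedNbhd, Set.mem_union, Set.mem_setOf_eq]
  constructor
  · rintro ((h | h) | ⟨s, hs, hadj⟩)
    · exact Or.inl (hDC h)
    · rcases hD'sub h with hr | hc
      · rw [hR] at hr
        obtain ⟨-, ⟨c, hc, hadj⟩, -⟩ := hr
        exact Or.inr ⟨c, hc, hadj⟩
      · exact Or.inl hc
    · rcases hs with hs | hs
      · exact Or.inr ⟨s, hDC hs, hadj⟩
      · rcases hD'sub hs with hr | hc
        · by_cases hvC : v ∈ C
          · exact Or.inl hvC
          · right
            by_contra hno
            exact hnoedge s hr v (by rw [hY]; exact ⟨hvC, hno⟩) hadj.symm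
        · exact Or.inr ⟨s, hc, hadj⟩
  · rintro (hvC | ⟨c, hc, hadj⟩)
    · exact hdom v (Or.inr hvC)
    · by_cases hvC : v ∈ C
      · exact hdom v (Or.inr hvC)
      · by_cases hd : ∃ d ∈ D, G.Adj v d
        · obtain ⟨d, hd, hadj'⟩ := hd
          exact Or.inr ⟨d, Or.inl hd, hadj'⟩
        · exact hdom v (Or.inl (by rw [hR]; exact ⟨hvC, ⟨c, hc, hadj⟩, hd⟩))
end

section
/- Let G and H be finite simple graphs, let list : V(G) → 2^{V(H)} be a function, and let wt : V(G) → ℚ be a nonnegative weight function. Let 𝒞 be a family of vertex subsets of G such that every member of 𝒞 is a solution, and suppose there exists a solution S of maximum weight such that S is the union of a subfamily 𝒞' ⊆ 𝒞 whose members are pairwise disjoint with no edge of G joining two distinct members. Let G^blob_𝒞 be the blob graph of 𝒞 and define wt^blob(C) = Σ_{v∈C} wt(v) for C ∈ 𝒞. Then the maximum of Σ_{v∈S'} wt(v) over all solutions S' of G equals the maximum of Σ_{C∈J} wt^blob(C) over all independent sets J of G^blob_𝒞. -/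
/-- Two vertex sets touch if they intersect or some edge joins them. -/
def Touch {V : Type*} (G : SimpleGraph V) (C1 C2 : Set V) : Prop :=
  (C1 ∩ C2).Nonempty ∨ ∃ u ∈ C1, ∃ v ∈ C2, G.Adj u v

/-- `S` is a solution: there is a list homomorphism from `G[S]` to `H`. -/
def IsSolution {VG VH : Type*} (G : SimpleGraph VG) (H : SimpleGraph VH)
    (list : VG → Set VH) (S : Set VG) : Prop :=
  ∃ f : VG → VH, (∀ u ∈ S, f u ∈ list u) ∧
    ∀ u ∈ S, ∀ v ∈ S, G.Adj u v → H.Adj (f u) (f v)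

/-- The blob graph of a family `𝒞` of vertex subsets of `G`: vertices are the members
of `𝒞`, and two distinct members are adjacent iff they touch. -/
def blobGraph {V : Type*} (G : SimpleGraph V) (𝒞 : Finset (Finset V)) :
    SimpleGraph {C : Finset V // C ∈ 𝒞} where
  Adj C1 C2 := C1 ≠ C2 ∧ Touch G (↑C1.1 : Set V) (↑C2.1 : Set V)
  symm := by
    constructor
    rintro C1 C2 ⟨hne, h⟩
    refine ⟨hne.symm, ?_⟩
    rcases h with ⟨v, hv1, hv2⟩ | ⟨u, hu, v, hv, hadj⟩
    · exact Or.inl ⟨v, hv2, hv1⟩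
    · exact Or.inr ⟨v, hv, u, hu, hadj.symm⟩
  loopless := by constructor; rintro C ⟨hne, -⟩; exact hne rfl

theorem stmt11 {VG VH : Type*} [Fintype VG] [DecidableEq VG] [Fintype VH]
    (G : SimpleGraph VG) (H : SimpleGraph VH) (list : VG → Set VH)
    (wt : VG → ℚ) (hwt : ∀ v, 0 ≤ wt v)
    (𝒞 : Finset (Finset VG))
    (hsol : ∀ C ∈ 𝒞, IsSolution G H list (↑C : Set VG))
    (hS : ∃ S : Finset VG, IsSolution G H list (↑S : Set VG) ∧
      (∀ S' : Finset VG, IsSolution G H list (↑S' : Set VG) →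
        ∑ v ∈ S', wt v ≤ ∑ v ∈ S, wt v) ∧
      ∃ 𝒞' ⊆ 𝒞, (∀ C1 ∈ 𝒞', ∀ C2 ∈ 𝒞', C1 ≠ C2 →
          ¬ Touch G (↑C1 : Set VG) (↑C2 : Set VG)) ∧
        S = 𝒞'.biUnion id) :
    ∃ W : ℚ,
      IsGreatest {w : ℚ | ∃ S' : Finset VG,
          IsSolution G H list (↑S' : Set VG) ∧ ∑ v ∈ S', wt v = w} W ∧
      IsGreatest {w : ℚ | ∃ J : Finset {C : Finset VG // C ∈ 𝒞},
          (∀ C1 ∈ J, ∀ C2 ∈ J, ¬ (blobGraph G 𝒞).Adj C1 C2) ∧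
          ∑ C ∈ J, ∑ v ∈ C.1, wt v = w} W := by
  classical
  obtain ⟨S, hSsol, hSmax, 𝒞', hsub, hnt, hSeq⟩ := hS
  have hdisj : ∀ C1 ∈ 𝒞', ∀ C2 ∈ 𝒞', C1 ≠ C2 → Disjoint C1 C2 := by
    intro C1 h1 C2 h2 hne
    rw [Finset.disjoint_left]
    intro a ha1 ha2
    exact hnt C1 h1 C2 h2 hne (Or.inl ⟨a, ha1, ha2⟩)
  refine ⟨∑ v ∈ S, wt v, ⟨⟨S, hSsol, rfl⟩,
    by rintro w ⟨S', h1, rfl⟩; exact hSmax S' h1⟩, ?_, ?_⟩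
  · -- membership in the blob set
    refine ⟨𝒞'.attach.map ⟨fun C => (⟨C.1, hsub C.2⟩ : {C // C ∈ 𝒞}), ?_⟩, ?_, ?_⟩
    · exact (show Function.Injective (fun C : {C // C ∈ 𝒞'} => (⟨C.1, hsub C.2⟩ : {C // C ∈ 𝒞})) from
        by intro a b hab; have hv := congrArg Subtype.val hab; exact Subtype.ext hv)
    · intro C1 hC1 C2 hC2 hadj
      simp only [Finset.mem_map, Finset.mem_attach, true_and,
        Function.Embedding.coeFn_mk] at hC1 hC2
      obtain ⟨a, rfl⟩ := hC1
      obtain ⟨b, rfl⟩ := hC2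
      obtain ⟨hne, htouch⟩ := hadj
      refine hnt a.1 a.2 b.1 b.2 (fun h => hne ?_) htouch
      exact Subtype.ext h
    · rw [Finset.sum_map]
      simp only [Function.Embedding.coeFn_mk]
      rw [Finset.sum_attach 𝒞' (fun C => ∑ v ∈ C, wt v), hSeq]
      exact (Finset.sum_biUnion (fun C1 h1 C2 h2 hne => hdisj C1 h1 C2 h2 hne)).symm
  · -- upper bound for the blob set
    rintro w ⟨J, hJind, rfl⟩
    -- union of J
    set T : Finset VG := J.biUnion (fun C => C.1) with hT
    have hJdisj : ∀ C1 ∈ J, ∀ C2 ∈ J, C1 ≠ C2 → Disjoint C1.1 C2.1 := by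
      intro C1 h1 C2 h2 hne
      rw [Finset.disjoint_left]
      intro a ha1 ha2
      exact hJind C1 h1 C2 h2 ⟨hne, Or.inl ⟨a, ha1, ha2⟩⟩
    have hsum : ∑ C ∈ J, ∑ v ∈ C.1, wt v = ∑ v ∈ T, wt v := by
      rw [hT, Finset.sum_biUnion]
      intro C1 h1 C2 h2 hne
      exact hJdisj C1 h1 C2 h2 hne
    rw [hsum]
    refine hSmax T ?_
    -- T is a solution
    obtain ⟨f0, -, -⟩ := hSsol
    have F : ∀ C : {C : Finset VG // C ∈ 𝒞}, ∃ f : VG → VH,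
        (∀ u ∈ (C.1 : Set VG), f u ∈ list u) ∧
        ∀ u ∈ (C.1 : Set VG), ∀ v ∈ (C.1 : Set VG), G.Adj u v → H.Adj (f u) (f v) :=
      fun C => hsol C.1 C.2
    -- key uniqueness: the chosen blob containing v is the only one
    have huniq : ∀ (v : VG) (h : ∃ C ∈ J, v ∈ C.1), ∀ C ∈ J, v ∈ C.1 → h.choose = C := by
      intro v h C hC hvC
      by_contra hne
      exact (Finset.disjoint_left.mp (hJdisj _ h.choose_spec.1 C hC hne))
        h.choose_spec.2 hvC
    refine ⟨fun v => if h : ∃ C ∈ J, v ∈ C.1 then (F h.choose).choose v else f0 v, ?_, ?_⟩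
    · intro u hu
      rw [Finset.mem_coe, hT, Finset.mem_biUnion] at hu
      obtain ⟨C, hC, huC⟩ := hu
      have h : ∃ C ∈ J, u ∈ C.1 := ⟨C, hC, huC⟩
      simp only [dif_pos h]
      exact (F h.choose).choose_spec.1 u h.choose_spec.2
    · intro u hu v hv hadj
      rw [Finset.mem_coe, hT, Finset.mem_biUnion] at hu hv
      obtain ⟨Cu, hCu, huCu⟩ := hu
      obtain ⟨Cv, hCv, hvCv⟩ := hv
      have h1 : ∃ C ∈ J, u ∈ C.1 := ⟨Cu, hCu, huCu⟩
      have h2 : ∃ C ∈ J, v ∈ C.1 := ⟨Cv, hCv, hvCv⟩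
      have hCeq : Cu = Cv := by
        by_contra hne
        exact hJind Cu hCu Cv hCv ⟨hne, Or.inr ⟨u, huCu, v, hvCv, hadj⟩⟩
      have e1 : h1.choose = Cu := huniq u h1 Cu hCu huCu
      have e2 : h2.choose = Cv := huniq v h2 Cv hCv hvCv
      simp only [dif_pos h1, dif_pos h2]
      have heq : h1.choose = h2.choose := by rw [e1, e2, hCeq]
      rw [heq]
      refine (F h2.choose).choose_spec.2 u ?_ v ?_ hadj
      · show u ∈ (h2.choose.1 : Finset VG)
        rw [e2, ← hCeq]; exact huCu
      · show v ∈ (h2.choose.1 : Finset VG)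
        rw [e2]; exact hvCv
end

section
/- Let G be a finite P5-free simple graph and let 𝒞 be a family of nonempty vertex subsets of G each of which induces a connected subgraph of G. Then the blob graph G^blob_𝒞 is P5-free. -/
namespace BlobP5Aux

open SimpleGraph

variable {V : Type*} {G : SimpleGraph V}

/-- Prefix of a walk up to its `n`-th vertex. -/
def wTake : {a b : V} → (w : G.Walk a b) → (n : ℕ) → G.Walk a (w.getVert n)
  | _, _, .nil, _ => .nil
  | _, _, .cons _ _, 0 => .nil
  | _, _, .cons h w, n + 1 => .cons h (wTake w n)

/-- Suffix of a walk from its `n`-th vertex. -/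
def wDrop : {a b : V} → (w : G.Walk a b) → (n : ℕ) → G.Walk (w.getVert n) b
  | _, _, .nil, _ => .nil
  | _, _, .cons h w, 0 => .cons h w
  | _, _, .cons _ w, n + 1 => wDrop w n

lemma wTake_length_le : ∀ {a b : V} (w : G.Walk a b) (n : ℕ), (wTake w n).length ≤ n
  | _, _, .nil, n => by simp [wTake]
  | _, _, .cons _ _, 0 => by simp [wTake]; rfl
  | _, _, .cons h w, n + 1 => by
      simpa [wTake] using wTake_length_le w n

lemma wDrop_length_le : ∀ {a b : V} (w : G.Walk a b) (n : ℕ),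
    (wDrop w n).length ≤ w.length - n
  | _, _, .nil, n => by simp [wDrop]
  | _, _, .cons _ _, 0 => by simp [wDrop]; exact le_of_eq rfl
  | _, _, .cons h w, n + 1 => by
      simpa [wDrop] using wDrop_length_le w n

lemma wTake_support_subset : ∀ {a b : V} (w : G.Walk a b) (n : ℕ) {v : V},
    v ∈ (wTake w n).support → v ∈ w.support
  | _, _, .nil, n, v => by simp [wTake]
  | _, _, .cons _ _, 0, v => by
      simp only [wTake, SimpleGraph.Walk.support_cons, List.mem_cons,
        SimpleGraph.Walk.support_nil]
      exact fun h => Or.inl (List.mem_singleton.mp h)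
  | _, _, .cons h w, n + 1, v => by
      simp only [wTake, SimpleGraph.Walk.support_cons, List.mem_cons]
      intro hv'
      rcases List.mem_cons.mp hv' with rfl | hv
      · exact Or.inl rfl
      · exact Or.inr (wTake_support_subset w n hv)

lemma wDrop_support_subset : ∀ {a b : V} (w : G.Walk a b) (n : ℕ) {v : V},
    v ∈ (wDrop w n).support → v ∈ w.support
  | _, _, .nil, n, v => fun h => h
  | _, _, .cons _ _, 0, v => by simp [wDrop]; exact fun h => List.mem_cons.mp h
  | _, _, .cons h w, n + 1, v => by
      simp only [wDrop, SimpleGraph.Walk.support_cons, List.mem_cons]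
      intro hv
      exact Or.inr (wDrop_support_subset w n hv)

lemma getVert_mem_support' {a b : V} (w : G.Walk a b) (n : ℕ) (hn : n ≤ w.length) :
    w.getVert n ∈ w.support :=
  SimpleGraph.Walk.mem_support_iff_exists_getVert.mpr ⟨n, rfl, hn⟩

end BlobP5Aux

theorem stmt12 {V : Type*} [Fintype V] (G : SimpleGraph V) (hP5 : IsP5Free G)
    (𝒞 : Finset (Finset V))
    (hne : ∀ C ∈ 𝒞, C.Nonempty)
    (hconn : ∀ C ∈ 𝒞, (G.induce (↑C : Set V)).Connected) :
    IsP5Free (blobGraph G 𝒞) := by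
  classical
  rintro ⟨p, hinj, hiff⟩
  set C : Fin 5 → Finset V := fun i => (p i).1 with hCdef
  have hCne : ∀ i, (C i).Nonempty := fun i => hne _ (p i).2
  have hCconn : ∀ i, (G.induce ((C i : Finset V) : Set V)).Connected :=
    fun i => hconn _ (p i).2
  have htadj : ∀ i j : Fin 5, (j : ℕ) = (i : ℕ) + 1 →
      Touch G (↑(C i)) (↑(C j)) := fun i j h => ((hiff i j).mpr (Or.inl h)).2
  have htle : ∀ i j : Fin 5, Touch G (↑(C i)) (↑(C j)) → (j : ℕ) ≤ (i : ℕ) + 1 := by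
    intro i j ht
    by_cases hij : i = j
    · subst hij; omega
    · have hadj : (blobGraph G 𝒞).Adj (p i) (p j) := ⟨fun h => hij (hinj h), ht⟩
      have := (hiff i j).mp hadj
      omega
  have contact : ∀ {x y : V} (i j : Fin 5), x ∈ C i → y ∈ C j →
      (x = y ∨ G.Adj x y) → Touch G (↑(C i)) (↑(C j)) := by
    intro x y i j hx hy hxy
    rcases hxy with rfl | hadj
    · exact Or.inl ⟨x, ⟨by simpa using hx, by simpa using hy⟩⟩
    · exact Or.inr ⟨x, by simpa using hx, y, by simpa using hy, hadj⟩
  set W : Set V := {v | ∃ i, v ∈ C i} with hWdef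
  -- any walk inside `W` from `C i` to `C j` has length at least `j - i - 1`-ish
  have keylen : ∀ {a b : V} (w : G.Walk a b), (∀ v ∈ w.support, v ∈ W) →
      ∀ i j : Fin 5, a ∈ C i → b ∈ C j →
        (j : ℕ) ≤ (i : ℕ) + max w.length 1 := by
    intro a b w
    induction w with
    | nil =>
      intro hs i j ha hb
      have := htle i j (contact i j ha hb (Or.inl rfl))
      simpa using this
    | @cons x y z h q ih =>
      intro hs i j ha hb
      have hy : y ∈ W := hs y (by simp)
      obtain ⟨k, hk⟩ := hy
      have h1 : (k : ℕ) ≤ (i : ℕ) + 1 := htle i k (contact i k ha hk (Or.inr h))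
      rcases Nat.eq_zero_or_pos q.length with h0 | hpos
      · have hyz : y = z := SimpleGraph.Walk.eq_of_length_eq_zero h0
        subst hyz
        have h2 := htle i j (contact i j ha hb (Or.inr h))
        simp only [SimpleGraph.Walk.length_cons, h0]
        omega
      · have hs' : ∀ v ∈ q.support, v ∈ W := fun v hv => hs v (by simp [hv])
        have h3 := ih hs' k j hk hb
        rw [Nat.max_eq_left hpos] at h3
        rw [SimpleGraph.Walk.length_cons, Nat.max_eq_left (by omega)]
        omega
  -- walks within a single blob
  have connwalk : ∀ (i : Fin 5) (x y : V), x ∈ C i → y ∈ C i →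
      ∃ w : G.Walk x y, ∀ v ∈ w.support, v ∈ C i := by
    intro i x y hx hy
    obtain ⟨w⟩ := (hCconn i).preconnected ⟨x, by simpa using hx⟩ ⟨y, by simpa using hy⟩
    refine ⟨w.map (SimpleGraph.Embedding.induce ((C i : Finset V) : Set V)).toHom, ?_⟩
    intro v hv
    replace hv : v ∈ (w.map (SimpleGraph.Embedding.induce ((C i : Finset V) : Set V)).toHom).support := hv
    rw [SimpleGraph.Walk.support_map] at hv
    obtain ⟨u, hu, rfl⟩ := List.mem_map.mp hv
    exact u.2
  -- extend a walk from one blob to a touching one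
  have step : ∀ (i j : Fin 5), Touch G (↑(C i)) (↑(C j)) → ∀ b ∈ C i,
      ∃ b' ∈ C j, ∃ w : G.Walk b b', ∀ v ∈ w.support, v ∈ W := by
    intro i j ht b hb
    rcases ht with ⟨v, hv⟩ | ⟨u, hu, v, hv, hadj⟩
    · obtain ⟨w, hw⟩ := connwalk i b v hb (by simpa using hv.1)
      exact ⟨v, by simpa using hv.2, w, fun x hx => ⟨i, hw x hx⟩⟩
    · obtain ⟨w, hw⟩ := connwalk i b u hb (by simpa using hu)
      refine ⟨v, by simpa using hv, w.append (SimpleGraph.Walk.cons hadj SimpleGraph.Walk.nil), ?_⟩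
      intro x hx
      rcases (SimpleGraph.Walk.mem_support_append_iff _ _).mp hx with hx | hx
      · exact ⟨i, hw x hx⟩
      · have : x = u ∨ x = v := by simpa using hx
        rcases this with rfl | rfl
        · exact ⟨i, hw x (SimpleGraph.Walk.end_mem_support w)⟩
        · exact ⟨j, by simpa using hv⟩
  -- build a walk from `C 0` to `C 4` inside `W`
  obtain ⟨a0, ha0⟩ := hCne 0
  obtain ⟨a1, ha1, w1, hw1⟩ := step 0 1 (htadj 0 1 (by decide)) a0 ha0
  obtain ⟨a2, ha2, w2, hw2⟩ := step 1 2 (htadj 1 2 (by decide)) a1 ha1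
  obtain ⟨a3, ha3, w3, hw3⟩ := step 2 3 (htadj 2 3 (by decide)) a2 ha2
  obtain ⟨a4, ha4, w4, hw4⟩ := step 3 4 (htadj 3 4 (by decide)) a3 ha3
  have hwfull : ∀ v ∈ (w1.append (w2.append (w3.append w4))).support, v ∈ W := by
    intro v hv
    simp only [SimpleGraph.Walk.mem_support_append_iff] at hv
    rcases hv with hv | hv | hv | hv
    · exact hw1 v hv
    · exact hw2 v hv
    · exact hw3 v hv
    · exact hw4 v hv
  -- minimize the length of such walks
  have hPex : ∃ n : ℕ, ∃ (a b : V) (w : G.Walk a b), a ∈ C 0 ∧ b ∈ C 4 ∧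
      (∀ v ∈ w.support, v ∈ W) ∧ w.length = n :=
    ⟨_, a0, a4, _, ha0, ha4, hwfull, rfl⟩
  obtain ⟨a, b, w, ha, hb, hsupp, hlen⟩ := Nat.find_spec hPex
  have hmin : ∀ {a' b' : V} (w' : G.Walk a' b'), a' ∈ C 0 → b' ∈ C 4 →
      (∀ v ∈ w'.support, v ∈ W) → w.length ≤ w'.length := by
    intro a' b' w' ha' hb' hs'
    rw [hlen]
    by_contra hlt
    push_neg at hlt
    exact Nat.find_min hPex hlt ⟨a', b', w', ha', hb', hs', rfl⟩
  -- the walk has length at least 4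
  have hd4 : 4 ≤ w.length := by
    have h4 := keylen w hsupp 0 4 ha hb
    have e0 : ((0 : Fin 5) : ℕ) = 0 := rfl
    have e4 : ((4 : Fin 5) : ℕ) = 4 := rfl
    rw [e0, e4, Nat.zero_add] at h4
    rcases le_max_iff.mp h4 with h | h
    · exact h
    · omega
  -- no repeated vertices among positions
  have hnodup : ∀ m n : ℕ, m < n → n ≤ w.length → w.getVert m ≠ w.getVert n := by
    intro m n hmn hn heq
    have hsub : ∀ v ∈ (((BlobP5Aux.wTake w m).copy rfl heq).append
        (BlobP5Aux.wDrop w n)).support, v ∈ W := by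
      intro v hv
      rcases (SimpleGraph.Walk.mem_support_append_iff _ _).mp hv with hv | hv
      · rw [SimpleGraph.Walk.support_copy] at hv
        exact hsupp v (BlobP5Aux.wTake_support_subset w m hv)
      · exact hsupp v (BlobP5Aux.wDrop_support_subset w n hv)
    have hle := hmin _ ha hb hsub
    rw [SimpleGraph.Walk.length_append, SimpleGraph.Walk.length_copy] at hle
    have l1 := BlobP5Aux.wTake_length_le w m
    have l2 := BlobP5Aux.wDrop_length_le w n
    omega
  -- no chords among positions
  have hnochord : ∀ m n : ℕ, m + 2 ≤ n → n ≤ w.length →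
      ¬ G.Adj (w.getVert m) (w.getVert n) := by
    intro m n hmn hn hadj
    have hsub : ∀ v ∈ ((BlobP5Aux.wTake w m).append
        (SimpleGraph.Walk.cons hadj (BlobP5Aux.wDrop w n))).support, v ∈ W := by
      intro v hv
      rcases (SimpleGraph.Walk.mem_support_append_iff _ _).mp hv with hv | hv
      · exact hsupp v (BlobP5Aux.wTake_support_subset w m hv)
      · have hv' : v = w.getVert m ∨ v ∈ (BlobP5Aux.wDrop w n).support := by
          simpa using hv
        rcases hv' with h | hv
        · rw [h]
          exact hsupp _ (BlobP5Aux.getVert_mem_support' w m (by omega))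
        · exact hsupp v (BlobP5Aux.wDrop_support_subset w n hv)
    have hle := hmin _ ha hb hsub
    rw [SimpleGraph.Walk.length_append, SimpleGraph.Walk.length_cons] at hle
    have l1 := BlobP5Aux.wTake_length_le w m
    have l2 := BlobP5Aux.wDrop_length_le w n
    omega
  -- assemble the induced P5 in G
  refine hP5 ⟨fun k => w.getVert (k : ℕ), ?_, ?_⟩
  · intro i j hij
    by_contra hne'
    have hv : (i : ℕ) ≠ (j : ℕ) := fun h => hne' (Fin.val_injective h)
    rcases hv.lt_or_gt with h | h
    · exact hnodup _ _ h ((Nat.le_of_lt_succ j.isLt).trans hd4) hij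
    · exact hnodup _ _ h ((Nat.le_of_lt_succ i.isLt).trans hd4) hij.symm
  · intro i j
    constructor
    · intro hadj
      by_contra hcons
      push_neg at hcons
      obtain ⟨h1, h2⟩ := hcons
      rcases lt_trichotomy (i : ℕ) (j : ℕ) with h | h | h
      · exact hnochord _ _ (by omega) ((Nat.le_of_lt_succ j.isLt).trans hd4) hadj
      · exact hadj.ne (congrArg w.getVert h)
      · exact hnochord _ _ (by omega) ((Nat.le_of_lt_succ i.isLt).trans hd4) hadj.symm
    · intro hc
      rcases hc with h | h
      · have hi : (i : ℕ) < w.length := by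
          have := j.isLt
          omega
        have := w.adj_getVert_succ hi
        show G.Adj (w.getVert (i : ℕ)) (w.getVert (j : ℕ))
        rw [h]
        exact this
      · have hj : (j : ℕ) < w.length := by
          have := i.isLt
          omega
        have := w.adj_getVert_succ hj
        show G.Adj (w.getVert (i : ℕ)) (w.getVert (j : ℕ))
        rw [h]
        exact this.symm
end
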